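/- arXiv:1809.02037 — 7 statements merged into one kernel-verified Lean document; each statement's English description precedes it below -/
import Mathlib

section
/- The maps ψ and ψ⁻¹ are mutually inverse bijections between P(ℚ) = {(a,b,c,A) ∈ ℚ³ × ℤ* : a² + b² = c², ab = 2A} and C(ℚ) = {(x,y,A) ∈ ℚ × ℚ* × ℤ* : y² = x³ − A²x}. -/
def PQ : Set (ℚ × ℚ × ℚ × ℤ) :=
  {p | p.2.2.2 ≠ 0 ∧ p.1 ^ 2 + p.2.1 ^ 2 = p.2.2.1 ^ 2 ∧ p.1 * p.2.1 = 2 * p.2.2.2}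

def CQ : Set (ℚ × ℚ × ℤ) :=
  {p | p.2.1 ≠ 0 ∧ p.2.2 ≠ 0 ∧ p.2.1 ^ 2 = p.1 ^ 3 - (p.2.2 : ℚ) ^ 2 * p.1}

def psiMap (p : ℚ × ℚ × ℚ × ℤ) : ℚ × ℚ × ℤ :=
  (p.2.1 * (p.2.1 + p.2.2.1) / 2, p.2.1 ^ 2 * (p.2.1 + p.2.2.1) / 2, p.2.2.2)

def psiInvMap (p : ℚ × ℚ × ℤ) : ℚ × ℚ × ℚ × ℤ :=
  (2 * p.1 * p.2.2 / p.2.1, (p.1 ^ 2 - (p.2.2 : ℚ) ^ 2) / p.2.1,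
    (p.1 ^ 2 + (p.2.2 : ℚ) ^ 2) / p.2.1, p.2.2)

/-!
On `P(ℚ)` we have `A = ab/2`, and `x = b(b+c)/2` satisfies `x² - A² = b²x` and `x² + A² = bcx`
because `(b+c)² ∓ a² = 2b(b+c), 2c(b+c)`; with `y = bx` the first identity is the curve equation
`y² = x(x² - A²)`, and dividing both by `y` recovers `b` and `c`. Conversely, on `C(ℚ)` the curve
equation says `(x² - A²)/y · x = y`, from which `ψ(ψ⁻¹(x, y, A)) = (x, y, A)` and `ab = 2A` follow;
the Pythagorean relation for `ψ⁻¹` is the identity `(2xA)² + (x² - A²)² = (x² + A²)²`.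
-/

theorem add_ne_zero_of_sq_add_sq_eq_sq {R : Type*} [CommRing R] [NoZeroDivisors R] {a b c : R}
    (h : a ^ 2 + b ^ 2 = c ^ 2) (ha : a ≠ 0) : b + c ≠ 0 := by
  intro hbc
  have : a ^ 2 = 0 := by linear_combination h + (c - b) * hbc
  exact ha (pow_eq_zero_iff two_ne_zero |>.mp this)

section Pythagorean

variable {K : Type*} [Field K] [CharZero K] {a b c : K}

theorem half_sq_sub_sq_of_sq_add_sq_eq_sq (h : a ^ 2 + b ^ 2 = c ^ 2) :
    (b * (b + c) / 2) ^ 2 - (a * b / 2) ^ 2 = b ^ 2 * (b * (b + c) / 2) := by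
  linear_combination (-b ^ 2 / 4) * h

theorem half_sq_add_sq_of_sq_add_sq_eq_sq (h : a ^ 2 + b ^ 2 = c ^ 2) :
    (b * (b + c) / 2) ^ 2 + (a * b / 2) ^ 2 = b * c * (b * (b + c) / 2) := by
  linear_combination (b ^ 2 / 4) * h

end Pythagorean

section Curve

variable {K : Type*} [Field K] {x y A : K}

theorem sq_add_sq_div_eq_sq_div (x y A : K) :
    (2 * x * A / y) ^ 2 + ((x ^ 2 - A ^ 2) / y) ^ 2 = ((x ^ 2 + A ^ 2) / y) ^ 2 := by
  ring

theorem sq_sub_sq_div_mul_eq (hy : y ≠ 0) (hC : y ^ 2 = x ^ 3 - A ^ 2 * x) :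
    (x ^ 2 - A ^ 2) / y * x = y := by
  field_simp
  linear_combination -hC

theorem mul_sq_sub_sq_div_eq (hy : y ≠ 0) (hC : y ^ 2 = x ^ 3 - A ^ 2 * x) :
    2 * x * A / y * ((x ^ 2 - A ^ 2) / y) = 2 * A := by
  field_simp
  linear_combination -2 * A * hC

theorem sq_sub_sq_div_mul_add_div_half [CharZero K] (hy : y ≠ 0)
    (hC : y ^ 2 = x ^ 3 - A ^ 2 * x) :
    (x ^ 2 - A ^ 2) / y * ((x ^ 2 - A ^ 2) / y + (x ^ 2 + A ^ 2) / y) / 2 = x := by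
  calc _ = (x ^ 2 - A ^ 2) / y * x * x / y := by ring
    _ = x := by rw [sq_sub_sq_div_mul_eq hy hC]; field_simp

theorem sq_sub_sq_div_sq_mul_add_div_half [CharZero K] (hy : y ≠ 0)
    (hC : y ^ 2 = x ^ 3 - A ^ 2 * x) :
    ((x ^ 2 - A ^ 2) / y) ^ 2 * ((x ^ 2 - A ^ 2) / y + (x ^ 2 + A ^ 2) / y) / 2 = y := by
  linear_combination
    (x ^ 2 - A ^ 2) / y * sq_sub_sq_div_mul_add_div_half hy hC + sq_sub_sq_div_mul_eq hy hC

end Curve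

theorem ne_zero_of_mem_PQ {a b c : ℚ} {A : ℤ} (h : (a, b, c, A) ∈ PQ) : b ≠ 0 ∧ b + c ≠ 0 := by
  obtain ⟨hA, hpy, hab⟩ := h
  have hab0 : a * b ≠ 0 := by rw [hab]; exact mul_ne_zero two_ne_zero (Int.cast_ne_zero.mpr hA)
  exact ⟨right_ne_zero_of_mul hab0, add_ne_zero_of_sq_add_sq_eq_sq hpy (left_ne_zero_of_mul hab0)⟩

theorem mapsTo_psiMap : Set.MapsTo psiMap PQ CQ := by
  rintro ⟨a, b, c, A⟩ h
  obtain ⟨hb, hbc⟩ := ne_zero_of_mem_PQ h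
  obtain ⟨hA, hpy, hab⟩ := h
  have hAab : (A : ℚ) = a * b / 2 := by linarith
  refine ⟨by simp only [psiMap]; positivity, hA, ?_⟩
  show (b ^ 2 * (b + c) / 2) ^ 2 = (b * (b + c) / 2) ^ 3 - (A : ℚ) ^ 2 * (b * (b + c) / 2)
  rw [hAab]
  linear_combination (-(b * (b + c) / 2)) * half_sq_sub_sq_of_sq_add_sq_eq_sq hpy

theorem mapsTo_psiInvMap : Set.MapsTo psiInvMap CQ PQ := by
  rintro ⟨x, y, A⟩ ⟨hy, hA, hC⟩
  exact ⟨hA, sq_add_sq_div_eq_sq_div x y A, mul_sq_sub_sq_div_eq hy hC⟩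

theorem leftInvOn_psiInvMap_psiMap : Set.LeftInvOn psiInvMap psiMap PQ := by
  rintro ⟨a, b, c, A⟩ h
  obtain ⟨hb, hbc⟩ := ne_zero_of_mem_PQ h
  obtain ⟨-, hpy, hab⟩ := h
  have hAab : (A : ℚ) = a * b / 2 := by linarith
  have hy : b ^ 2 * (b + c) / 2 ≠ 0 := by positivity
  simp only [psiMap, psiInvMap, Prod.mk.injEq, hAab]
  refine ⟨?_, ?_, ?_, trivial⟩
  · field_simp
  · rw [half_sq_sub_sq_of_sq_add_sq_eq_sq hpy, div_eq_iff hy]; ring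
  · rw [half_sq_add_sq_of_sq_add_sq_eq_sq hpy, div_eq_iff hy]; ring

theorem rightInvOn_psiInvMap_psiMap : Set.RightInvOn psiInvMap psiMap CQ := by
  rintro ⟨x, y, A⟩ ⟨hy, -, hC⟩
  simp only [psiMap, psiInvMap, Prod.mk.injEq]
  exact ⟨sq_sub_sq_div_mul_add_div_half hy hC, sq_sub_sq_div_sq_mul_add_div_half hy hC, trivial⟩

/-- ψ and ψ⁻¹ are mutually inverse bijections between P(ℚ) and C(ℚ). -/
theorem psi_bijOn_and_invOn :
    Set.BijOn psiMap PQ CQ ∧ Set.BijOn psiInvMap CQ PQ ∧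
      Set.InvOn psiInvMap psiMap PQ CQ := by
  have hinv : Set.InvOn psiInvMap psiMap PQ CQ :=
    ⟨leftInvOn_psiInvMap_psiMap, rightInvOn_psiInvMap_psiMap⟩
  exact ⟨hinv.bijOn mapsTo_psiMap mapsTo_psiInvMap,
    hinv.symm.bijOn mapsTo_psiInvMap mapsTo_psiMap, hinv⟩
end

section
/- If m, n, l are positive integers with m² = n² + nl + l² and k = n + l, then mn(m² − n²) = ml(m² − l²) = km(k² − m²); that is, the three Pythagorean triples (2mn, m²−n², m²+n²), (2ml, m²−l², m²+l²), (2mk, k²−m², k²+m²) all have the same area A. -/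
/-- if m² = n² + nl + l² and k = n + l, the three Pythagorean triples
(2mn, m²−n², m²+n²), (2ml, m²−l², m²+l²), (2mk, k²−m², k²+m²) have the same area. -/
theorem same_area (m n l k : ℤ) (hm : 0 < m) (hn : 0 < n) (hl : 0 < l)
    (hk : k = n + l) (heq : m ^ 2 = n ^ 2 + n * l + l ^ 2) :
    m * n * (m ^ 2 - n ^ 2) = m * l * (m ^ 2 - l ^ 2) ∧
      m * l * (m ^ 2 - l ^ 2) = k * m * (k ^ 2 - m ^ 2) := by
  subst hk
  refine ⟨by linear_combination (m*n - m*l)*heq, by linear_combination (m*l + (n+l)*m)*heq⟩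
end

section
/- Let m, n, l be positive integers with m² = n² + nl + l², k = n + l, and A = klmn. Then the three integral points (m²(m²−n²), m²(m²−n²)²), (m²(m²−l²), m²(m²−l²)²), (k²(k²−m²), k²(k²−m²)²) on the curve y² = x³ − A²x are collinear. -/
/-- the three integral points on C_A coming from an integral solution of
m² = n² + nl + l² lie on a straight line. -/
theorem three_points_collinear (m n l k A : ℤ) (hm : 0 < m) (hn : 0 < n) (hl : 0 < l)
    (hnl : n ≠ l) (hk : k = n + l) (hA : A = k * l * m * n)
    (heq : m ^ 2 = n ^ 2 + n * l + l ^ 2) :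
    ∃ lam mu : ℚ,
      ((m ^ 2 * (m ^ 2 - n ^ 2) ^ 2 : ℤ) : ℚ) = lam * ((m ^ 2 * (m ^ 2 - n ^ 2) : ℤ) : ℚ) + mu ∧
      ((m ^ 2 * (m ^ 2 - l ^ 2) ^ 2 : ℤ) : ℚ) = lam * ((m ^ 2 * (m ^ 2 - l ^ 2) : ℤ) : ℚ) + mu ∧
      ((k ^ 2 * (k ^ 2 - m ^ 2) ^ 2 : ℤ) : ℚ) = lam * ((k ^ 2 * (k ^ 2 - m ^ 2) : ℤ) : ℚ) + mu := by
  subst hk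
  have h : (m:ℚ)^2 = (n:ℚ)^2 + n*l + l^2 := by exact_mod_cast congrArg (Int.cast : ℤ → ℚ) heq
  refine ⟨(((n+l)^2 : ℤ) : ℚ), ((-(m^2*n*l*(n+l)^2) : ℤ) : ℚ), ?_, ?_, ?_⟩ <;> push_cast
  · linear_combination (m:ℚ)^2*((m:ℚ)^2 - 2*n^2 - n*l)*h
  · linear_combination (m:ℚ)^2*((m:ℚ)^2 - 2*l^2 - n*l)*h
  · linear_combination ((n:ℚ)+l)^2*(m:ℚ)^2*h
end

section
/- The only solutions in integers u, v, m of m² = u⁴ + u²v² + v⁴ have uv = 0; i.e., if u, v are positive integers then u⁴ + u²v² + v⁴ is not a perfect square. -/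
set_option maxHeartbeats 1000000

lemma odd_sq_zmod4 (a : ℕ) (h : a % 2 = 1) : ((a : ZMod 4))^2 = 1 := by
  obtain ⟨c, rfl⟩ : ∃ c, a = 2*c + 1 := ⟨a/2, by omega⟩
  have h4 : (4 : ZMod 4) = 0 := by decide
  push_cast
  have : ((2:ZMod 4)*c+1)^2 = 4*((c:ZMod 4)^2 + c) + 1 := by ring
  rw [this, h4]
  ring

lemma sq_zmod4_ne_three : ∀ t : ZMod 4, t^2 ≠ 3 := by decide

lemma descent_core (x y z : ℕ)
    (ih : ∀ X Y Z : ℕ, X^2 + Y^2 < x^2 + y^2 → Z^2 = X^4 + X^2*Y^2 + Y^4 → X*Y = 0)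
    (hx2 : x % 2 = 0) (hy2 : y % 2 = 1) (hco : Nat.Coprime x y) (hx1 : 0 < x)
    (heq : z^2 = x^4 + x^2*y^2 + y^4) : False := by
  have hy1 : 0 < y := by omega
  -- x*y + 1 ≤ x^2 + y^2
  have hxxyy : x*y + 1 ≤ x^2 + y^2 := by
    have e1 : x^2 = x*x := sq x
    have e2 : y^2 = y*y := sq y
    rcases le_total x y with h | h
    · have : x*y ≤ y*y := Nat.mul_le_mul_right _ h
      have : 1 ≤ x*x := Nat.one_le_iff_ne_zero.mpr (by positivity)
      omega
    · have : x*y ≤ x*x := Nat.mul_le_mul_left _ h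
      have : 1 ≤ y*y := Nat.one_le_iff_ne_zero.mpr (by positivity)
      omega
  obtain ⟨A, hA⟩ : ∃ A : ℕ, A = x^2 + x*y + y^2 := ⟨_, rfl⟩
  obtain ⟨B, hB⟩ : ∃ B : ℕ, B = x^2 + y^2 - x*y := ⟨_, rfl⟩
  have hz : (z:ℤ)^2 = (x:ℤ)^4 + (x:ℤ)^2*(y:ℤ)^2 + (y:ℤ)^4 := by exact_mod_cast heq
  have hAz : (A:ℤ) = (x:ℤ)^2 + (x:ℤ)*y + (y:ℤ)^2 := by rw [hA]; push_cast; ring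
  have hBz : (B:ℤ) = (x:ℤ)^2 + (y:ℤ)^2 - (x:ℤ)*y := by
    rw [hB, Nat.cast_sub (by omega)]
    push_cast; ring
  have hAB : A * B = z^2 := by
    have : ((A*B : ℕ) : ℤ) = ((z^2 : ℕ) : ℤ) := by
      push_cast [hAz, hBz]
      linear_combination -hz
    exact_mod_cast this
  -- parity helpers
  have hx2' : x^2 % 2 = 0 := by rw [Nat.pow_mod, hx2]
  have hy2' : y^2 % 2 = 1 := by rw [Nat.pow_mod, hy2]
  have hxy2 : (x*y) % 2 = 0 := by rw [Nat.mul_mod, hx2]; simp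
  have hAodd : A % 2 = 1 := by omega
  have hBodd : B % 2 = 1 := by omega
  -- A and B are coprime
  have hcoAB : Nat.Coprime A B := by
    by_contra hg
    obtain ⟨ℓ, hℓp, hℓg⟩ := Nat.exists_prime_and_dvd hg
    have hℓA : ℓ ∣ A := hℓg.trans (Nat.gcd_dvd_left _ _)
    have hℓB : ℓ ∣ B := hℓg.trans (Nat.gcd_dvd_right _ _)
    have hℓ2 : ℓ ≠ 2 := by
      rintro rfl
      obtain ⟨t, ht⟩ := hℓA
      omega
    have hℓsum : ℓ ∣ 2*(x^2+y^2) := by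
      have : A + B = 2*(x^2+y^2) := by omega
      exact this ▸ Nat.dvd_add hℓA hℓB
    have hℓdiff : ℓ ∣ 2*(x*y) := by
      have : A - B = 2*(x*y) := by omega
      exact this ▸ Nat.dvd_sub hℓA hℓB
    have hco2 : Nat.Coprime ℓ 2 := (Nat.coprime_primes hℓp Nat.prime_two).mpr hℓ2
    have hℓs : ℓ ∣ x^2 + y^2 := hco2.dvd_of_dvd_mul_left hℓsum
    have hℓd : ℓ ∣ x*y := hco2.dvd_of_dvd_mul_left hℓdiff
    have hℓ1 : ℓ ∣ 1 := by
      rcases (Nat.Prime.dvd_mul hℓp).mp hℓd with hx | hy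
      · have h4 : ℓ ∣ y^2 := by
          have h2 : ℓ ∣ x^2 := dvd_pow hx two_ne_zero
          have h3 := Nat.dvd_sub hℓs h2
          rwa [(by omega : x^2 + y^2 - x^2 = y^2)] at h3
        have := hℓp.dvd_of_dvd_pow h4
        exact hco ▸ Nat.dvd_gcd hx this
      · have h4 : ℓ ∣ x^2 := by
          have h2 : ℓ ∣ y^2 := dvd_pow hy two_ne_zero
          have h3 := Nat.dvd_sub hℓs h2
          rwa [(by omega : x^2 + y^2 - y^2 = x^2)] at h3
        have := hℓp.dvd_of_dvd_pow h4
        exact hco ▸ Nat.dvd_gcd this hy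
    exact Nat.Prime.one_lt hℓp |>.ne' (Nat.dvd_one.mp hℓ1)
  -- both factors are squares
  have hA1 : 1 ≤ A := by
    have : 1 ≤ y^2 := Nat.one_le_iff_ne_zero.mpr (pow_ne_zero _ (by omega))
    omega
  have hB1 : 1 ≤ B := by omega
  have habz : ((A:ℤ)) * (B:ℤ) = (z:ℤ)^2 := by exact_mod_cast hAB
  obtain ⟨a0, ha0⟩ := Int.sq_of_isCoprime (Nat.isCoprime_iff_coprime.mpr hcoAB) habz
  obtain ⟨b0, hb0⟩ := Int.sq_of_isCoprime (Nat.isCoprime_iff_coprime.mpr hcoAB.symm)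
    (by linear_combination habz : ((B:ℤ)) * (A:ℤ) = (z:ℤ)^2)
  have hA0 : (A:ℤ) = a0^2 := by
    rcases ha0 with h | h
    · exact h
    · exfalso
      have h1 : (1:ℤ) ≤ (A:ℤ) := by exact_mod_cast hA1
      nlinarith [sq_nonneg a0]
  have hB0 : (B:ℤ) = b0^2 := by
    rcases hb0 with h | h
    · exact h
    · exfalso
      have h1 : (1:ℤ) ≤ (B:ℤ) := by exact_mod_cast hB1
      nlinarith [sq_nonneg b0]
  obtain ⟨a, ha⟩ : ∃ a : ℕ, A = a^2 := by
    refine ⟨a0.natAbs, ?_⟩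
    have h1 : (A:ℤ) = ((a0.natAbs : ℕ):ℤ)^2 := by rw [Int.natCast_natAbs, sq_abs]; exact hA0
    exact_mod_cast h1
  obtain ⟨b, hb⟩ : ∃ b : ℕ, B = b^2 := by
    refine ⟨b0.natAbs, ?_⟩
    have h1 : (B:ℤ) = ((b0.natAbs : ℕ):ℤ)^2 := by rw [Int.natCast_natAbs, sq_abs]; exact hB0
    exact_mod_cast h1
  -- a, b odd, coprime, b < a
  have haodd : a % 2 = 1 := by
    rcases Nat.even_or_odd a with h | h
    · exfalso
      have : 2 ∣ A := ha ▸ dvd_pow h.two_dvd two_ne_zero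
      omega
    · exact Nat.odd_iff.mp h
  have hbodd : b % 2 = 1 := by
    rcases Nat.even_or_odd b with h | h
    · exfalso
      have : 2 ∣ B := hb ▸ dvd_pow h.two_dvd two_ne_zero
      omega
    · exact Nat.odd_iff.mp h
  have hb1 : 1 ≤ b := by
    rcases Nat.eq_zero_or_pos b with h | h
    · exfalso; rw [h] at hb; simp at hb; omega
    · exact h
  have hba : b < a := by
    by_contra hle
    push_neg at hle
    have : A ≤ B := by rw [ha, hb]; exact Nat.pow_le_pow_left hle 2
    have hxy1 : 1 ≤ x*y := Nat.one_le_iff_ne_zero.mpr (by positivity)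
    omega
  have hab_co : Nat.Coprime a b := by
    have h1 : Nat.gcd a b ∣ A := (Nat.gcd_dvd_left a b).trans (ha ▸ dvd_pow_self a two_ne_zero)
    have h2 : Nat.gcd a b ∣ B := (Nat.gcd_dvd_right a b).trans (hb ▸ dvd_pow_self b two_ne_zero)
    exact Nat.dvd_one.mp (hcoAB ▸ Nat.dvd_gcd h1 h2)
  -- p, q
  obtain ⟨q, hq⟩ : ∃ q : ℕ, a = b + 2*q := ⟨(a-b)/2, by omega⟩
  have hq1 : 1 ≤ q := by omega
  obtain ⟨p, hp⟩ : ∃ p : ℕ, p = b + q := ⟨b + q, rfl⟩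
  have hp2le : 2 ≤ p := by omega
  -- cast equations
  have haz : ((b:ℤ) + 2*q)^2 = (x:ℤ)^2 + (x:ℤ)*y + (y:ℤ)^2 := by
    rw [← hAz]
    exact_mod_cast congrArg (fun t : ℕ => (t:ℤ)) (hq ▸ ha.symm)
  have hbz2 : ((b:ℤ))^2 = (x:ℤ)^2 + (y:ℤ)^2 - (x:ℤ)*y := by
    rw [← hBz]
    exact_mod_cast congrArg (fun t : ℕ => (t:ℤ)) hb.symm
  have hpz : (p:ℤ) = (b:ℤ) + q := by exact_mod_cast congrArg (fun t : ℕ => (t:ℤ)) hp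
  have hxy_pq : x*y = 2*(p*q) := by
    have h2 : 2*((x:ℤ)*y) = 2*(2*((p:ℤ)*q)) := by linear_combination -haz + hbz2 - 4*(q:ℤ)*hpz
    have : ((x*y : ℕ):ℤ) = ((2*(p*q) : ℕ):ℤ) := by push_cast; linarith
    exact_mod_cast this
  have hsum : x^2 + y^2 = p^2 + q^2 := by
    have h2 : 2*((x:ℤ)^2+(y:ℤ)^2) = 2*((p:ℤ)^2+(q:ℤ)^2) := by
      linear_combination -haz - hbz2 - (2*(p:ℤ) + 2*(b:ℤ) + 2*(q:ℤ))*hpz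
    have : ((x^2+y^2 : ℕ):ℤ) = ((p^2+q^2 : ℕ):ℤ) := by push_cast; linarith
    exact_mod_cast this
  have hpq_co : Nat.Coprime p q := by
    have h1 : Nat.gcd p q ∣ a := by
      have : p + q = a := by omega
      exact this ▸ Nat.dvd_add (Nat.gcd_dvd_left p q) (Nat.gcd_dvd_right p q)
    have h2 : Nat.gcd p q ∣ b := by
      have : p - q = b := by omega
      exact this ▸ Nat.dvd_sub (Nat.gcd_dvd_left p q) (Nat.gcd_dvd_right p q)
    exact Nat.dvd_one.mp (hab_co ▸ Nat.dvd_gcd h1 h2)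
  -- w with x = 2w
  obtain ⟨w, hw⟩ : ∃ w : ℕ, x = 2*w := ⟨x/2, by omega⟩
  have hw1 : 1 ≤ w := by omega
  have hwy : w*y = p*q := by
    have h2 : 2*(w*y) = 2*(p*q) := by rw [← hxy_pq, hw]; ring
    omega
  have hcowy : Nat.Coprime w y := Nat.Coprime.coprime_dvd_left ⟨2, by omega⟩ hco
  -- gcd splitting
  obtain ⟨p1, hp1d⟩ : ∃ t, t = Nat.gcd p w := ⟨_, rfl⟩
  obtain ⟨p2, hp2d⟩ : ∃ t, t = Nat.gcd p y := ⟨_, rfl⟩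
  obtain ⟨q1, hq1d⟩ : ∃ t, t = Nat.gcd q w := ⟨_, rfl⟩
  obtain ⟨q2, hq2d⟩ : ∃ t, t = Nat.gcd q y := ⟨_, rfl⟩
  have hp12 : p1 * p2 = p := by
    rw [hp1d, hp2d]
    exact (Nat.gcd_mul_gcd_eq_iff_dvd_mul_of_coprime hcowy).mpr (hwy ▸ dvd_mul_right p q)
  have hq12 : q1 * q2 = q := by
    rw [hq1d, hq2d]
    exact (Nat.gcd_mul_gcd_eq_iff_dvd_mul_of_coprime hcowy).mpr (hwy ▸ dvd_mul_left q p)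
  have hw12 : p1 * q1 = w := by
    rw [hp1d, hq1d, Nat.gcd_comm p w, Nat.gcd_comm q w]
    exact (Nat.gcd_mul_gcd_eq_iff_dvd_mul_of_coprime hpq_co).mpr (hwy ▸ dvd_mul_right w y)
  have hy12 : p2 * q2 = y := by
    rw [hp2d, hq2d, Nat.gcd_comm p y, Nat.gcd_comm q y]
    exact (Nat.gcd_mul_gcd_eq_iff_dvd_mul_of_coprime hpq_co).mpr (hwy ▸ dvd_mul_left y w)
  have hp1w : p1 ∣ w := hp1d ▸ Nat.gcd_dvd_right p w
  have hp2y : p2 ∣ y := hp2d ▸ Nat.gcd_dvd_right p y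
  have hq1w : q1 ∣ w := hq1d ▸ Nat.gcd_dvd_right q w
  have hq2y : q2 ∣ y := hq2d ▸ Nat.gcd_dvd_right q y
  have hp1pos : 1 ≤ p1 := Nat.pos_of_ne_zero (by rintro rfl; rw [zero_mul] at hp12; omega)
  have hp2pos : 1 ≤ p2 := Nat.pos_of_ne_zero (by rintro rfl; rw [mul_zero] at hp12; omega)
  have hq1pos : 1 ≤ q1 := Nat.pos_of_ne_zero (by rintro rfl; rw [zero_mul] at hq12; omega)
  have hq2pos : 1 ≤ q2 := Nat.pos_of_ne_zero (by rintro rfl; rw [mul_zero] at hq12; omega)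
  have hp2odd : p2 % 2 = 1 := by
    rcases Nat.even_or_odd p2 with h | h
    · exfalso
      have : Even y := hy12 ▸ h.mul_right q2
      rw [Nat.even_iff] at this
      omega
    · exact Nat.odd_iff.mp h
  have hq2odd : q2 % 2 = 1 := by
    rcases Nat.even_or_odd q2 with h | h
    · exfalso
      have : Even y := hy12 ▸ h.mul_left p2
      rw [Nat.even_iff] at this
      omega
    · exact Nat.odd_iff.mp h
  have cop_p1q2 : Nat.Coprime p1 q2 := (hcowy.coprime_dvd_left hp1w).coprime_dvd_right hq2y
  have cop_q1p2 : Nat.Coprime q1 p2 := (hcowy.coprime_dvd_left hq1w).coprime_dvd_right hp2y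
  have cop_p1p2 : Nat.Coprime p1 p2 := (hcowy.coprime_dvd_left hp1w).coprime_dvd_right hp2y
  have cop_q1q2 : Nat.Coprime q1 q2 := (hcowy.coprime_dvd_left hq1w).coprime_dvd_right hq2y
  -- the big equation
  have hbigz : (2*((p1:ℤ)*q1))^2 + ((p2:ℤ)*q2)^2 = ((p1:ℤ)*p2)^2 + ((q1:ℤ)*q2)^2 := by
    have hbig : (2*(p1*q1))^2 + (p2*q2)^2 = (p1*p2)^2 + (q1*q2)^2 := by
      rw [hw12, hy12, hp12, hq12, ← hw]; exact hsum
    exact_mod_cast hbig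
  have e : (p1:ℤ)^2*((p2:ℤ)^2 - 4*(q1:ℤ)^2) = (q2:ℤ)^2*((p2:ℤ)^2 - (q1:ℤ)^2) := by
    linear_combination -hbigz
  obtain ⟨k, hk⟩ : ((p1:ℤ)^2) ∣ ((p2:ℤ)^2 - (q1:ℤ)^2) := by
    have hcp : IsCoprime ((p1:ℤ)^2) ((q2:ℤ)^2) := (Nat.isCoprime_iff_coprime.mpr cop_p1q2).pow
    exact hcp.dvd_of_dvd_mul_left ⟨_, e.symm⟩
  have hk2 : (p2:ℤ)^2 - 4*(q1:ℤ)^2 = (q2:ℤ)^2 * k := by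
    have h0 : ((p1:ℤ)^2) ≠ 0 := pow_ne_zero _ (by exact_mod_cast (by omega : p1 ≠ 0))
    apply mul_left_cancel₀ h0
    linear_combination e + (q2:ℤ)^2*hk
  have h3q : 3*(q1:ℤ)^2 = k*((p1:ℤ)^2 - (q2:ℤ)^2) := by linear_combination hk - hk2
  have h3p : 3*(p2:ℤ)^2 = k*(4*(p1:ℤ)^2 - (q2:ℤ)^2) := by linear_combination 4*hk - hk2
  have hk3 : k ∣ 3 := by
    obtain ⟨u, v, huv⟩ := (Nat.isCoprime_iff_coprime.mpr cop_q1p2).pow (n := 2) (m := 2)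
    refine ⟨u*((p1:ℤ)^2 - (q2:ℤ)^2) + v*(4*(p1:ℤ)^2 - (q2:ℤ)^2), ?_⟩
    linear_combination u*h3q + v*h3p - 3*huv
  have hkne : k ≠ 0 := by rintro rfl; norm_num at hk3
  have hkle : k ≤ 3 := Int.le_of_dvd (by norm_num) hk3
  have hkge : -3 ≤ k := by
    have := Int.le_of_dvd (by norm_num : (0:ℤ) < 3) hk3.neg_left
    omega
  have conv : ∀ j : ℤ, ((j.natAbs : ℕ):ℤ)^2 = j^2 := fun j => by
    rw [Int.natCast_natAbs, sq_abs]
  have hyy : y ≤ y^2 := Nat.le_self_pow two_ne_zero y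
  have hxx1 : 1 ≤ x^2 := Nat.one_le_iff_ne_zero.mpr (pow_ne_zero _ (by omega))
  interval_cases k
  · -- k = -3
    have hT : PythagoreanTriple (p2:ℤ) (2*(p1:ℤ)) (q2:ℤ) := by
      unfold PythagoreanTriple
      have h9 : (3:ℤ) * ((q2:ℤ)^2) = 3*((p2:ℤ)^2 + 4*(p1:ℤ)^2) := by
        linear_combination -4*hk + hk2
      have h10 := mul_left_cancel₀ (by norm_num : (3:ℤ) ≠ 0) h9
      linear_combination -h10
    have hg : Int.gcd (p2:ℤ) (2*(p1:ℤ)) = 1 := by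
      have c2 : Nat.Coprime p2 2 := (Nat.prime_two.coprime_iff_not_dvd.mpr (by omega)).symm
      have cAll : Nat.Coprime p2 (2*p1) := Nat.Coprime.mul_right c2 cop_p1p2.symm
      rw [show (2*(p1:ℤ)) = ((2*p1 : ℕ) : ℤ) by push_cast; ring, Int.gcd_natCast_natCast]
      exact cAll
    have hodd' : (p2:ℤ) % 2 = 1 := by omega
    have hpos' : 0 < (q2:ℤ) := by exact_mod_cast hq2pos
    obtain ⟨M, N, hEq1, hEq2, hEq3, hMN, hPar, hM0⟩ :=
      PythagoreanTriple.coprime_classification' hT hg hodd' hpos'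
    have hp1MN : (p1:ℤ) = M*N := by linarith
    have hZ : (q1:ℤ)^2 = M^4 + M^2*N^2 + N^4 := by
      linear_combination -hk + ((p2:ℤ)+M^2-N^2)*hEq1 + 3*((p1:ℤ)+M*N)*hp1MN
    have hZn : q1^2 = M.natAbs^4 + M.natAbs^2*N.natAbs^2 + N.natAbs^4 := by
      have h1 : ((q1:ℕ):ℤ)^2 = ((M.natAbs:ℕ):ℤ)^4 + ((M.natAbs:ℕ):ℤ)^2*((N.natAbs:ℕ):ℤ)^2
          + ((N.natAbs:ℕ):ℤ)^4 := by
        rw [show ((M.natAbs:ℕ):ℤ)^4 = (((M.natAbs:ℕ):ℤ)^2)^2 by ring,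
            show ((N.natAbs:ℕ):ℤ)^4 = (((N.natAbs:ℕ):ℤ)^2)^2 by ring, conv M, conv N]
        linear_combination hZ
      exact_mod_cast h1
    have hmeas : M.natAbs^2 + N.natAbs^2 = q2 := by
      have h1 : ((M.natAbs:ℕ):ℤ)^2 + ((N.natAbs:ℕ):ℤ)^2 = (q2:ℤ) := by
        rw [conv M, conv N]; linarith
      exact_mod_cast h1
    have hlt : M.natAbs^2 + N.natAbs^2 < x^2 + y^2 := by
      have : q2 ≤ y := Nat.le_of_dvd hy1 hq2y
      omega
    have h0 := ih M.natAbs N.natAbs q1 hlt hZn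
    have hMN0 : M*N = 0 := Int.natAbs_eq_zero.mp (by rw [Int.natAbs_mul]; exact h0)
    have : (p1:ℤ) = 0 := by rw [hp1MN, hMN0]
    omega
  · -- k = -2
    norm_num at hk3
  · -- k = -1 : mod 4 contradiction
    have hcast := congrArg (fun t : ℤ => (t : ZMod 4)) hk2
    push_cast at hcast
    rw [odd_sq_zmod4 p2 hp2odd, odd_sq_zmod4 q2 hq2odd] at hcast
    rw [show (4 : ZMod 4) = 0 by decide] at hcast
    simp at hcast
    exact (by decide : ¬ ((1:ZMod 4) = -1)) hcast
  · -- k = 0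
    exact hkne rfl
  · -- k = 1
    have hT : PythagoreanTriple (q2:ℤ) (2*(q1:ℤ)) (p2:ℤ) := by
      unfold PythagoreanTriple
      linear_combination -hk2
    have hg : Int.gcd (q2:ℤ) (2*(q1:ℤ)) = 1 := by
      have c2 : Nat.Coprime q2 2 := (Nat.prime_two.coprime_iff_not_dvd.mpr (by omega)).symm
      have cAll : Nat.Coprime q2 (2*q1) := Nat.Coprime.mul_right c2 cop_q1q2.symm
      rw [show (2*(q1:ℤ)) = ((2*q1 : ℕ) : ℤ) by push_cast; ring, Int.gcd_natCast_natCast]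
      exact cAll
    have hodd' : (q2:ℤ) % 2 = 1 := by omega
    have hpos' : 0 < (p2:ℤ) := by exact_mod_cast hp2pos
    obtain ⟨M, N, hEq1, hEq2, hEq3, hMN, hPar, hM0⟩ :=
      PythagoreanTriple.coprime_classification' hT hg hodd' hpos'
    have hq1MN : (q1:ℤ) = M*N := by linarith
    have hZ : (p1:ℤ)^2 = M^4 + M^2*N^2 + N^4 := by
      linear_combination -hk + ((p2:ℤ)+M^2+N^2)*hEq3 - ((q1:ℤ)+M*N)*hq1MN
    have hZn : p1^2 = M.natAbs^4 + M.natAbs^2*N.natAbs^2 + N.natAbs^4 := by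
      have h1 : ((p1:ℕ):ℤ)^2 = ((M.natAbs:ℕ):ℤ)^4 + ((M.natAbs:ℕ):ℤ)^2*((N.natAbs:ℕ):ℤ)^2
          + ((N.natAbs:ℕ):ℤ)^4 := by
        rw [show ((M.natAbs:ℕ):ℤ)^4 = (((M.natAbs:ℕ):ℤ)^2)^2 by ring,
            show ((N.natAbs:ℕ):ℤ)^4 = (((N.natAbs:ℕ):ℤ)^2)^2 by ring, conv M, conv N]
        linear_combination hZ
      exact_mod_cast h1
    have hmeas : M.natAbs^2 + N.natAbs^2 = p2 := by
      have h1 : ((M.natAbs:ℕ):ℤ)^2 + ((N.natAbs:ℕ):ℤ)^2 = (p2:ℤ) := by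
        rw [conv M, conv N]; linarith
      exact_mod_cast h1
    have hlt : M.natAbs^2 + N.natAbs^2 < x^2 + y^2 := by
      have : p2 ≤ y := Nat.le_of_dvd hy1 hp2y
      omega
    have h0 := ih M.natAbs N.natAbs p1 hlt hZn
    have hMN0 : M*N = 0 := Int.natAbs_eq_zero.mp (by rw [Int.natAbs_mul]; exact h0)
    have : (q1:ℤ) = 0 := by rw [hq1MN, hMN0]
    omega
  · -- k = 2
    norm_num at hk3
  · -- k = 3 : mod 4 contradiction
    have hcast := congrArg (fun t : ℤ => (t : ZMod 4)) hk2
    push_cast at hcast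
    rw [odd_sq_zmod4 p2 hp2odd, odd_sq_zmod4 q2 hq2odd] at hcast
    rw [show (4 : ZMod 4) = 0 by decide] at hcast
    simp at hcast
    exact (by decide : ¬ ((1:ZMod 4) = (3:ZMod 4))) hcast

theorem nat_plus : ∀ N : ℕ, ∀ x y z : ℕ, x^2 + y^2 ≤ N → z^2 = x^4 + x^2*y^2 + y^4 → x*y = 0 := by
  intro N
  induction N using Nat.strong_induction_on with
  | _ N IH =>
    intro x y z hm heq
    by_contra hxy
    have hx1 : 0 < x := Nat.pos_of_ne_zero (by rintro rfl; simp at hxy)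
    have hy1 : 0 < y := Nat.pos_of_ne_zero (by rintro rfl; simp at hxy)
    have hx2p : 1 ≤ x^2 := Nat.one_le_iff_ne_zero.mpr (pow_ne_zero _ (by omega))
    have hy2p : 1 ≤ y^2 := Nat.one_le_iff_ne_zero.mpr (pow_ne_zero _ (by omega))
    have ih' : ∀ X Y Z : ℕ, X^2+Y^2 < x^2+y^2 → Z^2 = X^4+X^2*Y^2+Y^4 → X*Y = 0 := by
      intro X Y Z hlt he
      exact IH (N-1) (by omega) X Y Z (by omega) he
    have hd0 : Nat.gcd x y ≠ 0 := by
      intro h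
      exact absurd (Nat.eq_zero_of_gcd_eq_zero_left h) (by omega)
    rcases eq_or_lt_of_le (show 1 ≤ Nat.gcd x y by omega) with hd | hd
    · -- coprime case
      have hco : Nat.Coprime x y := hd.symm
      rcases Nat.mod_two_eq_zero_or_one x with hx2 | hx2 <;>
        rcases Nat.mod_two_eq_zero_or_one y with hy2 | hy2
      · -- both even: contradicts coprimality
        have h2 : 2 ∣ Nat.gcd x y :=
          Nat.dvd_gcd (Nat.dvd_of_mod_eq_zero hx2) (Nat.dvd_of_mod_eq_zero hy2)
        rw [← hd] at h2
        omega
      · exact descent_core x y z ih' hx2 hy2 hco hx1 heq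
      · -- x odd, y even: swap
        refine descent_core y x z ?_ hy2 hx2 hco.symm hy1 (by rw [heq]; ring)
        intro X Y Z hlt he
        have := ih' X Y Z (by omega) he
        exact this
      · -- both odd: mod 4
        have hcast := congrArg (fun t : ℕ => (t : ZMod 4)) heq
        push_cast at hcast
        have e1 := odd_sq_zmod4 x hx2
        have e2 := odd_sq_zmod4 y hy2
        have h3 : ((z : ZMod 4))^2 = 3 := by
          rw [hcast, show ((x:ZMod 4))^4 + ((x:ZMod 4))^2*((y:ZMod 4))^2 + ((y:ZMod 4))^4
              = (((x:ZMod 4))^2)^2 + ((x:ZMod 4))^2*((y:ZMod 4))^2 + (((y:ZMod 4))^2)^2 by ring,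
            e1, e2]
          norm_num
        exact sq_zmod4_ne_three _ h3
    · -- gcd ≥ 2 : divide through
      obtain ⟨x', hx'⟩ : Nat.gcd x y ∣ x := Nat.gcd_dvd_left x y
      obtain ⟨y', hy'⟩ : Nat.gcd x y ∣ y := Nat.gcd_dvd_right x y
      set d := Nat.gcd x y with hdd
      have heqz : z^2 = d^4 * (x'^4 + x'^2*y'^2 + y'^4) := by rw [heq, hx', hy']; ring
      have hdvd : d^2 ∣ z := by
        have h1 : (d^2)^2 ∣ z^2 := ⟨x'^4 + x'^2*y'^2 + y'^4, by rw [heqz]; ring⟩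
        exact (Nat.pow_dvd_pow_iff two_ne_zero).mp h1
      obtain ⟨z', hz'⟩ := hdvd
      have heq' : z'^2 = x'^4 + x'^2*y'^2 + y'^4 := by
        have h4 : 0 < d^4 := by positivity
        have hcalc : d^4 * z'^2 = d^4 * (x'^4 + x'^2*y'^2 + y'^4) := by
          calc d^4 * z'^2 = (d^2*z')^2 := by ring
            _ = z^2 := by rw [← hz']
            _ = _ := heqz
        exact Nat.eq_of_mul_eq_mul_left h4 hcalc
      have hx'0 : x' ≠ 0 := by rintro rfl; rw [mul_zero] at hx'; omega
      have hy'0 : y' ≠ 0 := by rintro rfl; rw [mul_zero] at hy'; omega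
      have hm1 : d^2*(x'^2+y'^2) = x^2+y^2 := by rw [hx', hy']; ring
      have h44 : 4 ≤ d^2 := by
        have h5 : 2*2 ≤ d*d := Nat.mul_le_mul hd hd
        have : d^2 = d*d := sq d
        omega
      have hS1 : 1 ≤ x'^2 + y'^2 :=
        Nat.one_le_iff_ne_zero.mpr (by positivity)
      have hlt : x'^2+y'^2 < x^2+y^2 := by
        have h6 : 4*(x'^2+y'^2) ≤ d^2*(x'^2+y'^2) := Nat.mul_le_mul_right _ h44
        omega
      exact absurd (ih' x' y' z' hlt heq') (Nat.mul_ne_zero hx'0 hy'0)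

/-- the only integer solutions of m² = u⁴ + u²v² + v⁴ have uv = 0. -/
theorem quartic_plus_not_square (u v m : ℤ)
    (h : m ^ 2 = u ^ 4 + u ^ 2 * v ^ 2 + v ^ 4) : u * v = 0 := by
  have habs : ∀ j : ℤ, ((j.natAbs : ℕ):ℤ)^2 = j^2 := fun j => by
    rw [Int.natCast_natAbs, sq_abs]
  have hnat : (m.natAbs)^2 = (u.natAbs)^4 + (u.natAbs)^2*(v.natAbs)^2 + (v.natAbs)^4 := by
    have h1 : ((m.natAbs : ℕ):ℤ)^2 = ((u.natAbs : ℕ):ℤ)^4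
        + ((u.natAbs : ℕ):ℤ)^2*((v.natAbs : ℕ):ℤ)^2 + ((v.natAbs : ℕ):ℤ)^4 := by
      rw [show ((u.natAbs:ℕ):ℤ)^4 = (((u.natAbs:ℕ):ℤ)^2)^2 by ring,
          show ((v.natAbs:ℕ):ℤ)^4 = (((v.natAbs:ℕ):ℤ)^2)^2 by ring, habs u, habs v, habs m]
      linear_combination h
    exact_mod_cast h1
  have h0 := nat_plus (u.natAbs^2 + v.natAbs^2) u.natAbs v.natAbs m.natAbs le_rfl hnat
  have : (u*v).natAbs = 0 := by rw [Int.natAbs_mul]; exact h0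
  exact Int.natAbs_eq_zero.mp this
end

section
/- Let m, n, l be positive integers with m² = n² + nl + l², m square-free, and k, l, n pairwise relatively prime, where k = n + l. Then at most one of the integers k, l, n is a perfect square. -/
/-!
Put `k = n + l`. If `n` and `l` are squares then `m² = x⁴ + x²y² + y⁴`, and if `k` and `l` (or `k`
and `n`) are squares then `m² = x⁴ - x²y² + y⁴` with `x² ≠ y²`. Primitive solutions of
`x⁴ ± x²y² + y⁴ = z²` (other than `x² = y²` for the minus sign) are excluded by Fermat descent on
`|z|`. For `x` odd and `y` even, parametrize the Pythagorean triple `(z, xy, x² + y²)`, resp.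
`(x² - y², xy, z)`, by `(m, n)` and split `x · (y/2) = m · n` as `x = ab`, `y/2 = cd`, `m = ac`,
`n = bd`. Comparing `x² ± y²` with `m² ± n²` makes two quadratic forms in two of `a, b, c, d`
proportional to the squares of the other two, with a factor `T ∣ 3`. Signs and congruences
modulo 3 and 4 leave only those `T` for which two Pythagorean triples share a side, and
parametrizing one of them yields a smaller solution. For the minus sign with `x, y` odd, the
parametrization `(σ, ρ)` of `(xy, x² - y², z)` directly gives the smaller solution
`(σ, ρ, (x² + y²) / 2)`.
-/

theorem not_of_descent {P : ℤ → ℤ → ℤ → Prop}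
    (h : ∀ x y z, P x y z → ∃ x' y' z', P x' y' z' ∧ z'.natAbs < z.natAbs) (x y z : ℤ) :
    ¬ P x y z := by
  induction hN : z.natAbs using Nat.strong_induction_on generalizing x y z with
  | _ N ih =>
    intro hP
    obtain ⟨x', y', z', hP', hlt⟩ := h x y z hP
    exact ih _ (hN ▸ hlt) x' y' z' rfl hP'

theorem exists_mul_mul_of_mul_eq_mul {α : Type*} [CommMonoidWithZero α] [IsCancelMulZero α]
    [DecompositionMonoid α] {x y m n : α} (h : x * y = m * n) (hm : m ≠ 0) :
    ∃ a b c d, x = a * b ∧ y = c * d ∧ m = a * c ∧ n = b * d := by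
  obtain ⟨a, c, ⟨b, rfl⟩, ⟨d, rfl⟩, rfl⟩ := exists_dvd_and_dvd_of_dvd_mul (Dvd.intro n h.symm)
  exact ⟨a, b, c, d, rfl, rfl, rfl, mul_left_cancel₀ hm (h ▸ mul_mul_mul_comm a b c d)⟩

theorem IsCoprime.exists_eq_mul_of_mul_eq_mul {R : Type*} [CommSemiring R] [IsDomain R]
    {a d M N : R} (had : IsCoprime a d) (hd : d ≠ 0) (h : a * M = d * N) :
    ∃ T, M = d * T ∧ N = a * T := by
  obtain ⟨T, rfl⟩ : d ∣ M := had.symm.dvd_of_dvd_mul_left ⟨N, h⟩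
  refine ⟨T, rfl, mul_left_cancel₀ hd ?_⟩
  rw [← h]
  ring

theorem IsCoprime.dvd_of_dvd_mul_of_dvd_mul {R : Type*} [CommSemiring R] {b c k T : R}
    (hbc : IsCoprime b c) (hb : T ∣ k * b) (hc : T ∣ k * c) : T ∣ k := by
  obtain ⟨u, v, h⟩ := hbc
  have hk : k = u * (k * b) + v * (k * c) := by
    calc k = k * (u * b + v * c) := by rw [h, mul_one]
      _ = u * (k * b) + v * (k * c) := by ring
  rw [hk]
  exact dvd_add (hb.mul_left u) (hc.mul_left v)

theorem IsCoprime.sq_sub_sq_mul {x y : ℤ} (hxy : IsCoprime x y) :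
    IsCoprime (x ^ 2 - y ^ 2) (x * y) := by
  refine IsCoprime.mul_right ?_ ?_
  · have h := (hxy.pow_right (n := 2)).neg_right.add_mul_left_right x
    rw [show -y ^ 2 + x * x = x ^ 2 - y ^ 2 by ring] at h
    exact h.symm
  · have h := (hxy.symm.pow_right (n := 2)).add_mul_left_right (-y)
    rw [show x ^ 2 + y * -y = x ^ 2 - y ^ 2 by ring] at h
    exact h.symm

theorem Int.eq_of_dvd_three {T : ℤ} (h : T ∣ 3) : T = 1 ∨ T = -1 ∨ T = 3 ∨ T = -3 := by
  have h₁ := Int.le_of_dvd three_pos h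
  have h₂ : -3 ≤ T := neg_le.1 (Int.le_of_dvd three_pos (neg_dvd.2 h))
  interval_cases T <;> simp_all

theorem Int.exists_pythagorean_parametrization {P Q R : ℤ} (h : P ^ 2 + Q ^ 2 = R ^ 2)
    (hPQ : IsCoprime P Q) (hP : Odd P) :
    ∃ m n, P = m ^ 2 - n ^ 2 ∧ Q = 2 * m * n ∧ |R| = m ^ 2 + n ^ 2 ∧ IsCoprime m n := by
  have hR : 0 < |R| := by
    refine abs_pos.2 fun hR => ?_
    obtain rfl : P = 0 := by nlinarith [sq_nonneg P, sq_nonneg Q]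
    exact absurd hP (by decide)
  have htriple : PythagoreanTriple P Q |R| := by
    unfold PythagoreanTriple
    rw [abs_mul_abs_self]
    linear_combination h
  obtain ⟨m, n, hP, hQ, hR, hmn, -⟩ := htriple.coprime_classification'
    (Int.isCoprime_iff_gcd_eq_one.1 hPQ) (Int.odd_iff.1 hP) hR
  exact ⟨m, n, hP, hQ, hR, Int.isCoprime_iff_gcd_eq_one.2 hmn⟩

theorem Int.sq_add_sq_ne_three_mul_sq {a d : ℤ} (had : IsCoprime a d) (c : ℤ) :
    a ^ 2 + d ^ 2 ≠ 3 * c ^ 2 := by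
  intro h
  have hmod := congrArg (Int.cast : ℤ → ZMod 3) h
  push_cast at hmod
  have h0 : (a : ZMod 3) = 0 ∧ (d : ZMod 3) = 0 := by
    revert hmod
    generalize (a : ZMod 3) = a'
    generalize (d : ZMod 3) = d'
    generalize (c : ZMod 3) = c'
    revert a' d' c'
    decide
  simp only [ZMod.intCast_zmod_eq_zero_iff_dvd] at h0
  have := Int.isUnit_iff.1 (had.isUnit_of_dvd' h0.1 h0.2)
  norm_num at this

theorem Int.sq_add_sq_ne_four_mul_sq_of_odd {a b : ℤ} (ha : Odd a) (hb : Odd b) (c : ℤ) :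
    a ^ 2 + b ^ 2 ≠ 4 * c ^ 2 := by
  have := Int.sq_mod_four_eq_one_of_odd ha
  have := Int.sq_mod_four_eq_one_of_odd hb
  omega

theorem Int.quartic_add_ne_sq_of_odd_of_odd {x y : ℤ} (hx : Odd x) (hy : Odd y) (z : ℤ) :
    x ^ 4 + x ^ 2 * y ^ 2 + y ^ 4 ≠ z ^ 2 := by
  obtain ⟨i, rfl⟩ := hx
  obtain ⟨j, rfl⟩ := hy
  intro h
  have hmod := congrArg (Int.cast : ℤ → ZMod 4) h
  push_cast at hmod
  revert hmod
  generalize (i : ZMod 4) = i'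
  generalize (j : ZMod 4) = j'
  generalize (z : ZMod 4) = z'
  revert i' j' z'
  decide

structure IsPrimitiveQuarticSol (k x y z : ℤ) : Prop where
  left_ne_zero : x ≠ 0
  right_ne_zero : y ≠ 0
  isCoprime : IsCoprime x y
  eq : x ^ 4 + k * x ^ 2 * y ^ 2 + y ^ 4 = z ^ 2

/-- Parametrizing `Q² + (2v)² = u²` as `Q = s² - t²`, `v = st`, `u = ±(s² + t²)` turns
`u² - v²` into `s⁴ + s²t² + t⁴`. -/
theorem exists_isPrimitiveQuarticSol_one_of_sq_eq {u v P Q : ℤ} (hQ : Odd Q)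
    (hQv : IsCoprime Q (2 * v)) (h₁ : u ^ 2 = P ^ 2 + v ^ 2) (h₂ : u ^ 2 = Q ^ 2 + (2 * v) ^ 2)
    (hv : v ≠ 0) : ∃ s t, IsPrimitiveQuarticSol 1 s t P := by
  obtain ⟨s, t, -, hv', hu, hst⟩ := Int.exists_pythagorean_parametrization h₂.symm hQv hQ
  have hv' : v = s * t := mul_left_cancel₀ two_ne_zero (by linear_combination hv')
  have hu : u ^ 2 = (s ^ 2 + t ^ 2) ^ 2 := by rw [← hu, sq_abs]
  have hst0 : s * t ≠ 0 := hv' ▸ hv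
  exact ⟨s, t, ⟨left_ne_zero_of_mul hst0, right_ne_zero_of_mul hst0, hst,
    by linear_combination h₁ - hu + (v + s * t) * hv'⟩⟩

/-- The same parametrization turns `Q² + v²` into `s⁴ - s²t² + t⁴`. -/
theorem exists_isPrimitiveQuarticSol_neg_one_of_sq_eq {u v P Q : ℤ} (hQ : Odd Q)
    (hQv : IsCoprime Q (2 * v)) (h₁ : P ^ 2 = Q ^ 2 + v ^ 2) (h₂ : u ^ 2 = Q ^ 2 + (2 * v) ^ 2)
    (hv : v ≠ 0) : ∃ s t, IsPrimitiveQuarticSol (-1) s t P ∧ s ^ 2 ≠ t ^ 2 := by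
  obtain ⟨s, t, hQ', hv', -, hst⟩ := Int.exists_pythagorean_parametrization h₂.symm hQv hQ
  have hv' : v = s * t := mul_left_cancel₀ two_ne_zero (by linear_combination hv')
  have hst0 : s * t ≠ 0 := hv' ▸ hv
  refine ⟨s, t, ⟨left_ne_zero_of_mul hst0, right_ne_zero_of_mul hst0, hst,
    by linear_combination -h₁ - (Q + s ^ 2 - t ^ 2) * hQ' - (v + s * t) * hv'⟩, fun h => ?_⟩
  rw [hQ', h, sub_self] at hQ
  exact absurd hQ (by decide)

namespace IsPrimitiveQuarticSol

variable {k x y z : ℤ}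

theorem swap (hs : IsPrimitiveQuarticSol k x y z) : IsPrimitiveQuarticSol k y x z :=
  ⟨hs.right_ne_zero, hs.left_ne_zero, hs.isCoprime.symm, by linear_combination hs.eq⟩

theorem isCoprime_left (hs : IsPrimitiveQuarticSol k x y z) : IsCoprime x z := by
  have h := (hs.isCoprime.pow_right (n := 4)).add_mul_left_right (x ^ 3 + k * x * y ^ 2)
  rw [show y ^ 4 + x * (x ^ 3 + k * x * y ^ 2) = z ^ 2 by linear_combination hs.eq,
    IsCoprime.pow_right_iff two_pos] at h
  exact h

theorem odd_or_odd (hs : IsPrimitiveQuarticSol k x y z) : Odd x ∨ Odd y := by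
  by_contra! h
  simp only [Int.not_odd_iff_even, even_iff_two_dvd] at h
  have := Int.isUnit_iff.1 (hs.isCoprime.isUnit_of_dvd' h.1 h.2)
  norm_num at this

theorem natAbs_right_lt (hs : IsPrimitiveQuarticSol 1 x y z) : y.natAbs < z.natAbs := by
  rw [Int.natAbs_lt_iff_sq_lt, ← hs.eq]
  have hx := pow_pos (sq_pos_of_ne_zero hs.left_ne_zero) 2
  have hy : 1 ≤ y ^ 2 := sq_pos_of_ne_zero hs.right_ne_zero
  nlinarith [sq_nonneg (x * y)]

theorem exists_factorization_one (hs : IsPrimitiveQuarticSol 1 x y z) (hx : Odd x)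
    (hy : Even y) : ∃ a b c d, x = a * b ∧ y = 2 * (c * d) ∧
      a ^ 2 * (b ^ 2 - c ^ 2) = d ^ 2 * (b ^ 2 - 4 * c ^ 2) := by
  have hpyth : z ^ 2 + (x * y) ^ 2 = (x ^ 2 + y ^ 2) ^ 2 := by linear_combination -hs.eq
  have hcop : IsCoprime z (x * y) :=
    hs.isCoprime_left.symm.mul_right hs.swap.isCoprime_left.symm
  have hz : Odd z := by
    rw [← Int.odd_pow' two_ne_zero, ← hs.eq]
    simp [parity_simps, hx, hy]
  obtain ⟨m, n, -, hmn, hsum, -⟩ := Int.exists_pythagorean_parametrization hpyth hcop hz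
  rw [abs_of_nonneg (by positivity)] at hsum
  obtain ⟨y₁, rfl⟩ := hy
  have hm : m ≠ 0 := by
    rintro rfl
    exact mul_ne_zero hs.left_ne_zero hs.right_ne_zero (by linear_combination hmn)
  obtain ⟨a, b, c, d, rfl, rfl, rfl, rfl⟩ := exists_mul_mul_of_mul_eq_mul
    (show x * y₁ = m * n from mul_left_cancel₀ two_ne_zero (by linear_combination hmn)) hm
  exact ⟨a, b, c, d, rfl, by ring, by linear_combination hsum⟩

theorem exists_descent_one_of_odd_of_even (hs : IsPrimitiveQuarticSol 1 x y z) (hx : Odd x)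
    (hy : Even y) : ∃ x' y' z', IsPrimitiveQuarticSol 1 x' y' z' ∧ z'.natAbs < z.natAbs := by
  have hyz := hs.natAbs_right_lt
  have hy0 := hs.right_ne_zero
  have hcop := hs.isCoprime
  obtain ⟨a, b, c, d, rfl, rfl, h⟩ := hs.exists_factorization_one hx hy
  obtain ⟨ha, hb⟩ := Int.odd_mul.1 hx
  have hc : c ≠ 0 := by rintro rfl; simp at hy0
  have hd : d ≠ 0 := by rintro rfl; simp at hy0
  have had : IsCoprime a d := hcop.mono (dvd_mul_right a b) ⟨2 * c, by ring⟩
  have hbc : IsCoprime b c := hcop.mono (dvd_mul_left b a) ⟨2 * d, by ring⟩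
  obtain ⟨T, h₁, h₂⟩ := had.pow.exists_eq_mul_of_mul_eq_mul (pow_ne_zero 2 hd) h
  have h₃ : 3 * b ^ 2 = T * (4 * d ^ 2 - a ^ 2) := by linear_combination 4 * h₁ - h₂
  have h₄ : 3 * c ^ 2 = T * (d ^ 2 - a ^ 2) := by linear_combination h₁ - h₂
  have hT : T ∣ 3 := hbc.pow.dvd_of_dvd_mul_of_dvd_mul ⟨_, h₃⟩ ⟨_, h₄⟩
  rcases Int.eq_of_dvd_three hT with rfl | rfl | rfl | rfl
  · obtain ⟨s, t, hst⟩ := exists_isPrimitiveQuarticSol_one_of_sq_eq (u := b) (P := d) ha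
      (hcop.mono (dvd_mul_right a b) ⟨d, by ring⟩)
      (by linear_combination h₁) (by linear_combination h₂) hc
    exact ⟨s, t, d, hst, (Int.natAbs_le_of_dvd_ne_zero ⟨2 * c, by ring⟩ hy0).trans_lt hyz⟩
  · exact absurd (by linear_combination h₂) (Int.sq_add_sq_ne_four_mul_sq_of_odd ha hb c)
  · exact absurd (by linarith) (Int.sq_add_sq_ne_four_mul_sq_of_odd ha hb d)
  · obtain ⟨s, t, hst⟩ := exists_isPrimitiveQuarticSol_one_of_sq_eq (u := a) (P := c) hb
      (hcop.mono (dvd_mul_left b a) ⟨c, by ring⟩)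
      (by linarith) (by linarith) hd
    exact ⟨s, t, c, hst, (Int.natAbs_le_of_dvd_ne_zero ⟨2 * d, by ring⟩ hy0).trans_lt hyz⟩

theorem exists_factorization_neg_one (hs : IsPrimitiveQuarticSol (-1) x y z) (hx : Odd x)
    (hy : Even y) : ∃ a b c d, x = a * b ∧ y = 2 * (c * d) ∧ |z| = (a * c) ^ 2 + (b * d) ^ 2 ∧
      b ^ 2 * (a ^ 2 + d ^ 2) = c ^ 2 * (a ^ 2 + 4 * d ^ 2) := by
  have hpyth : (x ^ 2 - y ^ 2) ^ 2 + (x * y) ^ 2 = z ^ 2 := by linear_combination hs.eq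
  have hodd : Odd (x ^ 2 - y ^ 2) := by simp [parity_simps, hx, hy]
  obtain ⟨m, n, hdiff, hmn, hz, -⟩ :=
    Int.exists_pythagorean_parametrization hpyth hs.isCoprime.sq_sub_sq_mul hodd
  obtain ⟨y₁, rfl⟩ := hy
  have hm : m ≠ 0 := by
    rintro rfl
    exact mul_ne_zero hs.left_ne_zero hs.right_ne_zero (by linear_combination hmn)
  obtain ⟨a, b, c, d, rfl, rfl, rfl, rfl⟩ := exists_mul_mul_of_mul_eq_mul
    (show x * y₁ = m * n from mul_left_cancel₀ two_ne_zero (by linear_combination hmn)) hm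
  exact ⟨a, b, c, d, rfl, by ring, hz, by linear_combination hdiff⟩

theorem exists_descent_neg_one_of_odd_of_even (hs : IsPrimitiveQuarticSol (-1) x y z)
    (hx : Odd x) (hy : Even y) : ∃ x' y' z',
      (IsPrimitiveQuarticSol (-1) x' y' z' ∧ x' ^ 2 ≠ y' ^ 2) ∧ z'.natAbs < z.natAbs := by
  have hx0 := hs.left_ne_zero
  have hy0 := hs.right_ne_zero
  have hcop := hs.isCoprime
  obtain ⟨a, b, c, d, rfl, rfl, hz, h⟩ := hs.exists_factorization_neg_one hx hy
  have ha := (Int.odd_mul.1 hx).1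
  have hc : c ≠ 0 := by rintro rfl; simp at hy0
  have hd : d ≠ 0 := by rintro rfl; simp at hy0
  have had : IsCoprime a d := hcop.mono (dvd_mul_right a b) ⟨2 * c, by ring⟩
  have hbc : IsCoprime b c := hcop.mono (dvd_mul_left b a) ⟨2 * d, by ring⟩
  obtain ⟨T, h₁, h₂⟩ := hbc.pow.exists_eq_mul_of_mul_eq_mul (pow_ne_zero 2 hc) h
  have h₃ : 3 * a ^ 2 = T * (4 * c ^ 2 - b ^ 2) := by linear_combination 4 * h₁ - h₂
  have h₄ : 3 * d ^ 2 = T * (b ^ 2 - c ^ 2) := by linear_combination h₂ - h₁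
  have hT : T ∣ 3 := had.pow.dvd_of_dvd_mul_of_dvd_mul ⟨_, h₃⟩ ⟨_, h₄⟩
  have hpos : 0 < a ^ 2 + d ^ 2 := by positivity
  rcases Int.eq_of_dvd_three hT with rfl | rfl | rfl | rfl
  · obtain ⟨s, t, hst⟩ := exists_isPrimitiveQuarticSol_neg_one_of_sq_eq (u := b) (P := c) ha
      (hcop.mono (dvd_mul_right a b) ⟨c, by ring⟩)
      (by linear_combination -h₁) (by linear_combination -h₂) hd
    refine ⟨s, t, c, hst, ?_⟩
    rw [Int.natAbs_lt_iff_sq_lt, ← sq_abs z, hz]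
    have hbd := sq_pos_of_ne_zero (mul_ne_zero (right_ne_zero_of_mul hx0) hd)
    have ha1 : 1 ≤ a ^ 2 := sq_pos_of_ne_zero (left_ne_zero_of_mul hx0)
    calc c ^ 2 ≤ (a * c) ^ 2 := by nlinarith [sq_nonneg c]
      _ < (a * c) ^ 2 + (b * d) ^ 2 := by linarith
      _ ≤ ((a * c) ^ 2 + (b * d) ^ 2) ^ 2 := Int.le_self_sq _
  · nlinarith [sq_nonneg c]
  · exact absurd (by linear_combination h₁) (Int.sq_add_sq_ne_three_mul_sq had c)
  · nlinarith [sq_nonneg c]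

theorem exists_descent_neg_one_of_odd_of_odd (hs : IsPrimitiveQuarticSol (-1) x y z)
    (hne : x ^ 2 ≠ y ^ 2) (hx : Odd x) (hy : Odd y) : ∃ x' y' z',
      (IsPrimitiveQuarticSol (-1) x' y' z' ∧ x' ^ 2 ≠ y' ^ 2) ∧ z'.natAbs < z.natAbs := by
  have hpyth : (x * y) ^ 2 + (x ^ 2 - y ^ 2) ^ 2 = z ^ 2 := by linear_combination hs.eq
  obtain ⟨σ, ρ, hprod, hdiff, hz, hcop⟩ := Int.exists_pythagorean_parametrization hpyth
    hs.isCoprime.sq_sub_sq_mul.symm (Int.odd_mul.2 ⟨hx, hy⟩)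
  obtain ⟨w, hw⟩ := (hx.pow (n := 2)).add_odd (hy.pow (n := 2))
  have hσρ : σ * ρ ≠ 0 := fun h0 => hne (by linear_combination hdiff + 2 * h0)
  have hw4 : 4 * w ^ 2 = 4 * (σ ^ 4 - σ ^ 2 * ρ ^ 2 + ρ ^ 4) := by
    linear_combination -(x ^ 2 + y ^ 2 + 2 * w) * hw + (x ^ 2 - y ^ 2 + 2 * σ * ρ) * hdiff +
      4 * (x * y + σ ^ 2 - ρ ^ 2) * hprod
  have hw2 : w ^ 2 = σ ^ 4 - σ ^ 2 * ρ ^ 2 + ρ ^ 4 := mul_left_cancel₀ four_ne_zero hw4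
  refine ⟨σ, ρ, w, ⟨⟨left_ne_zero_of_mul hσρ, right_ne_zero_of_mul hσρ, hcop,
    by linear_combination -hw2⟩, fun h => ?_⟩, ?_⟩
  · exact mul_ne_zero hs.left_ne_zero hs.right_ne_zero (by linear_combination hprod + h)
  · rw [Int.natAbs_lt_iff_sq_lt, ← sq_abs z, hz, hw2]
    nlinarith [sq_pos_of_ne_zero hσρ]

end IsPrimitiveQuarticSol

theorem not_isPrimitiveQuarticSol_one (x y z : ℤ) : ¬ IsPrimitiveQuarticSol 1 x y z := by
  refine not_of_descent (fun x y z hs => ?_) x y z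
  rcases hs.odd_or_odd with hx | hy
  · rcases Int.even_or_odd y with hy | hy
    · exact hs.exists_descent_one_of_odd_of_even hx hy
    · exact absurd (by linear_combination hs.eq) (Int.quartic_add_ne_sq_of_odd_of_odd hx hy z)
  · rcases Int.even_or_odd x with hx | hx
    · exact hs.swap.exists_descent_one_of_odd_of_even hy hx
    · exact absurd (by linear_combination hs.eq) (Int.quartic_add_ne_sq_of_odd_of_odd hx hy z)

theorem IsPrimitiveQuarticSol.sq_eq_sq {x y z : ℤ} (hs : IsPrimitiveQuarticSol (-1) x y z) :
    x ^ 2 = y ^ 2 := by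
  by_contra hne
  refine not_of_descent (P := fun x y z => IsPrimitiveQuarticSol (-1) x y z ∧ x ^ 2 ≠ y ^ 2)
    (fun x y z ⟨hs, hne⟩ => ?_) x y z ⟨hs, hne⟩
  rcases hs.odd_or_odd with hx | hy
  · rcases Int.even_or_odd y with hy | hy
    · exact hs.exists_descent_neg_one_of_odd_of_even hx hy
    · exact hs.exists_descent_neg_one_of_odd_of_odd hne hx hy
  · rcases Int.even_or_odd x with hx | hx
    · exact hs.swap.exists_descent_neg_one_of_odd_of_even hy hx
    · exact hs.exists_descent_neg_one_of_odd_of_odd hne hx hy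

theorem Nat.not_isSquare_and_isSquare_of_sq_eq {m n l : ℕ} (hn : 0 < n) (hl : 0 < l)
    (hnl : n.Coprime l) (heq : m ^ 2 = n ^ 2 + n * l + l ^ 2) : ¬ (IsSquare n ∧ IsSquare l) := by
  rintro ⟨⟨a, rfl⟩, ⟨b, rfl⟩⟩
  have ha : a ≠ 0 := by rintro rfl; simp at hn
  have hb : b ≠ 0 := by rintro rfl; simp at hl
  have heqZ : (m : ℤ) ^ 2 = (a * a) ^ 2 + a * a * (b * b) + (b * b) ^ 2 := by exact_mod_cast heq
  exact not_isPrimitiveQuarticSol_one a b m ⟨Int.natCast_ne_zero.2 ha, Int.natCast_ne_zero.2 hb,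
    Nat.isCoprime_iff_coprime.2 hnl.coprime_mul_left.coprime_mul_left_right,
    by linear_combination -heqZ⟩

theorem Nat.not_isSquare_add_and_isSquare_of_sq_eq {m n l : ℕ} (hn : 0 < n) (hl : 0 < l)
    (hnl : (n + l).Coprime l) (heq : m ^ 2 = n ^ 2 + n * l + l ^ 2) :
    ¬ (IsSquare (n + l) ∧ IsSquare l) := by
  rintro ⟨⟨c, hc⟩, ⟨b, rfl⟩⟩
  have hc0 : c ≠ 0 := by rintro rfl; simp at hc; omega
  have hb : b ≠ 0 := by rintro rfl; simp at hl
  rw [hc] at hnl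
  have heqZ : (m : ℤ) ^ 2 = n ^ 2 + n * (b * b) + (b * b) ^ 2 := by exact_mod_cast heq
  have hcZ : (n : ℤ) + b * b = c * c := by exact_mod_cast hc
  have hsq := IsPrimitiveQuarticSol.sq_eq_sq (z := m) ⟨Int.natCast_ne_zero.2 hc0,
    Int.natCast_ne_zero.2 hb,
    Nat.isCoprime_iff_coprime.2 hnl.coprime_mul_left.coprime_mul_left_right,
    by linear_combination -heqZ - (c ^ 2 + n) * hcZ⟩
  have : (n : ℤ) = 0 := by linear_combination hcZ + hsq
  omega

theorem at_most_one_square_general (m n l k : ℕ) (hn : 0 < n) (hl : 0 < l)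
    (hk : k = n + l) (heq : m ^ 2 = n ^ 2 + n * l + l ^ 2)
    (hkl : Nat.Coprime k l) (hkn : Nat.Coprime k n) (hnl : Nat.Coprime n l) :
    ¬(IsSquare k ∧ IsSquare l) ∧ ¬(IsSquare k ∧ IsSquare n) ∧
      ¬(IsSquare l ∧ IsSquare n) := by
  subst hk
  refine ⟨Nat.not_isSquare_add_and_isSquare_of_sq_eq hn hl hkl heq, ?_,
    fun h => Nat.not_isSquare_and_isSquare_of_sq_eq hn hl hnl heq h.symm⟩
  rw [add_comm] at hkn ⊢
  exact Nat.not_isSquare_add_and_isSquare_of_sq_eq hl hn hkn (by rw [heq]; ring)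

/-- if m² = n² + nl + l² with m square-free and k, l, n pairwise
coprime (k = n + l), then at most one of k, l, n is a perfect square. -/
theorem at_most_one_square (m n l k : ℕ) (hm : 0 < m) (hn : 0 < n) (hl : 0 < l)
    (hk : k = n + l) (heq : m ^ 2 = n ^ 2 + n * l + l ^ 2)
    (hmsf : Squarefree m)
    (hkl : Nat.Coprime k l) (hkn : Nat.Coprime k n) (hnl : Nat.Coprime n l) :
    ¬(IsSquare k ∧ IsSquare l) ∧ ¬(IsSquare k ∧ IsSquare n) ∧
      ¬(IsSquare l ∧ IsSquare n) :=
  at_most_one_square_general m n l k hn hl hk heq hkl hkn hnl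
end

section
/- Let m, n, l, k, A be as follows: m, n, l pairwise relatively prime positive integers with m square-free, m² = n² + nl + l², k = n + l, A = klmn. Then the 14 integers kl, kn, nl, mn, ml, mk, −kl, −kn, −nl, −mn, −ml, −mk, klmn, −klmn are pairwise inequivalent modulo squares of nonzero rationals. -/
/-!
Write the fourteen numbers as `±∏_{i ∈ S} vᵢ` with `v = (k, l, m, n)` and `S` one of the seven
nonempty subsets of even size. The product of two of them is, up to a nonzero square, `±∏` over the
symmetric difference of their index sets, so it suffices that `kl, kn, nl, mn, ml, mk, klmn` are not
squares. Those containing `m` are `m` times a number prime to the squarefree `m > 1`. Since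
`m² = n² + nl + l² = k² - kl + l² = k² - kn + n²`, a square among `nl, kl, kn` would make both
factors squares and give a nontrivial solution of `x⁴ + x²y² + y⁴ = z²` or of
`x⁴ - x²y² + y⁴ = z²`.

Neither equation has one, by descent on `z`. When `x` (resp. `y`) is even, write
`4z² = W² + 3V⁴` with `W = 2x² + y², V = y` (resp. `W = 2y² - x², V = x`): the coprime factors of
`(2z - W)(2z + W) = 3V⁴` are `3s², t²` in one order or the other. One order is impossible modulo 8;
in the other, two applications of the parametrisation of primitive Pythagorean triples produce a
smaller solution. When `x, y` are both odd, the first equation is impossible modulo 4 and the second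
parametrises the triple `(xy, x² - y², z)` into a smaller solution.
-/

theorem IsCoprime.of_sq_add_sq_eq_sq {R : Type*} [CommRing R] {x y z : R}
    (h : x ^ 2 + y ^ 2 = z ^ 2) (hxz : IsCoprime x z) : IsCoprime x y := by
  have : IsCoprime x (z ^ 2 - x * x) := by simpa using hxz.pow_right (n := 2)
  rw [← h, show x ^ 2 + y ^ 2 - x * x = y ^ 2 by ring] at this
  exact IsCoprime.pow_right_iff two_pos |>.1 this

theorem IsCoprime.exists_add_eq_two_mul {R : Type*} [CommRing R] {s t : R} (hco : IsCoprime s t)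
    (hs : Odd s) (ht : Odd t) : ∃ r, s + t = 2 * r ∧ IsCoprime r s := by
  obtain ⟨r, hr⟩ := hs.add_odd ht
  refine ⟨r, by rw [hr, two_mul], IsCoprime.symm (IsCoprime.of_mul_right_right (y := 2) ?_)⟩
  rw [two_mul, ← hr]
  simpa [add_comm] using hco.add_mul_left_right 1

namespace Int

theorem sq_emod_eight_eq_one_of_odd {x : ℤ} (hx : Odd x) : x ^ 2 % 8 = 1 := by
  obtain ⟨a, rfl⟩ := hx
  obtain ⟨b, hb⟩ := even_mul_succ_self a
  have : (2 * a + 1) ^ 2 = 8 * b + 1 := by linear_combination 4 * hb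
  omega

theorem sq_emod_four_ne_three (x : ℤ) : x ^ 2 % 4 ≠ 3 := by
  rcases even_or_odd x with ⟨a, rfl⟩ | hx
  · have : (a + a) ^ 2 = 4 * a ^ 2 := by ring
    omega
  · rw [sq_mod_four_eq_one_of_odd hx]; decide

theorem odd_of_isCoprime_of_even {a b : ℤ} (hab : IsCoprime a b) (ha : Even a) : Odd b := by
  refine not_even_iff_odd.1 fun hb => ?_
  have := hab.isUnit_of_dvd' ha.two_dvd hb.two_dvd
  norm_num [isUnit_iff] at this

theorem isCoprime_add_sub_of_odd {a b : ℤ} (hab : IsCoprime a b) (h : Odd (a + b)) :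
    IsCoprime (a + b) (a - b) := by
  have ha : IsCoprime (a + b) a := by simpa [add_comm] using hab.symm.add_mul_left_left 1
  have := ((isCoprime_two_right.2 h).mul_right ha).add_mul_left_right (-1)
  rwa [show 2 * a + (a + b) * -1 = a - b by ring] at this

theorem exists_sq_sq_of_isCoprime_of_mul_eq_sq {a b c : ℤ} (ha : 0 < a) (hb : 0 < b)
    (hab : IsCoprime a b) (h : a * b = c ^ 2) :
    ∃ s t : ℤ, 0 < s ∧ 0 < t ∧ a = s ^ 2 ∧ b = t ^ 2 := by
  have key : ∀ {a b : ℤ}, 0 < a → IsCoprime a b → a * b = c ^ 2 → ∃ s, 0 < s ∧ a = s ^ 2 := by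
    intro a b ha hab h
    obtain ⟨s, hs | hs⟩ := sq_of_isCoprime hab h
    · exact ⟨|s|, abs_pos.2 (by rintro rfl; simp_all), by rw [sq_abs, hs]⟩
    · nlinarith [sq_nonneg s]
  obtain ⟨s, hs, rfl⟩ := key ha hab h
  obtain ⟨t, ht, rfl⟩ := key hb hab.symm (by rw [mul_comm, h])
  exact ⟨s, t, hs, ht, rfl, rfl⟩

theorem exists_eq_sq_sub_sq_of_sq_add_sq_eq_sq {x y z : ℤ} (h : x ^ 2 + y ^ 2 = z ^ 2)
    (hxy : IsCoprime x y) (hx : Odd x) (hz : 0 < z) :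
    ∃ p q : ℤ, IsCoprime p q ∧ x = p ^ 2 - q ^ 2 ∧ y = 2 * p * q ∧ z = p ^ 2 + q ^ 2 := by
  obtain ⟨p, q, hx, hy, hz, hpq, -⟩ := PythagoreanTriple.coprime_classification'
    (by unfold PythagoreanTriple; linear_combination h) (isCoprime_iff_gcd_eq_one.1 hxy)
    (odd_iff.1 hx) hz
  exact ⟨p, q, isCoprime_iff_gcd_eq_one.2 hpq, hx, hy, hz⟩

theorem not_of_sq_descent {P : ℤ → Prop} (h : ∀ z, P z → ∃ z', z' ^ 2 < z ^ 2 ∧ P z')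
    (z : ℤ) : ¬P z := by
  induction hn : z.natAbs using Nat.strong_induction_on generalizing z with
  | _ n ih =>
    intro hz
    obtain ⟨z', hlt, hz'⟩ := h z hz
    exact ih _ (hn ▸ natAbs_lt_iff_sq_lt.2 hlt) z' rfl hz'

theorem isCoprime_two_mul_sub_two_mul_add {z W V : ℤ} (hW : Odd W) (hVW : IsCoprime V W)
    (h : 4 * z ^ 2 = W ^ 2 + 3 * V ^ 4) : IsCoprime (2 * z - W) (2 * z + W) := by
  have hA : IsCoprime (2 * z - W) 2 := by
    rw [isCoprime_two_right, sub_eq_add_neg]; exact (even_two_mul z).add_odd hW.neg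
  refine isCoprime_of_prime_dvd (fun h0 => by simp [h0.1] at hA) fun p hp hpA hpB => ?_
  have hpW : p ∣ W := by
    have h2W : p ∣ 2 * W := by simpa [two_mul] using dvd_sub hpB hpA
    exact (hp.dvd_or_dvd h2W).resolve_left fun hp2 => hp.not_isUnit (hA.isUnit_of_dvd' hpA hp2)
  have hpV : IsCoprime p V := (Prime.coprime_iff_not_dvd hp).2
    fun hpV => hp.not_isUnit (hVW.isUnit_of_dvd' hpV hpW)
  have hpp : p * p ∣ 3 := by
    refine ((hpV.pow_right (n := 4)).mul_left hpV.pow_right).dvd_of_dvd_mul_right ?_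
    rw [show 3 * V ^ 4 = (2 * z - W) * (2 * z + W) by linear_combination -h]
    exact mul_dvd_mul hpA hpB
  have h1 := hp.not_isUnit
  rw [isUnit_iff] at h1
  have hle := le_of_dvd three_pos hpp
  obtain hp2 | hp2 : 2 ≤ p ∨ p ≤ -2 := by have := hp.ne_zero; omega
  all_goals nlinarith

theorem exists_of_mul_eq_three_mul_pow_four {A B V : ℤ} (hA : 0 < A) (hB : 0 < B)
    (hAB : IsCoprime A B) (h3 : 3 ∣ A) (h : A * B = 3 * V ^ 4) :
    ∃ s t : ℤ, 0 < s ∧ 0 < t ∧ IsCoprime s t ∧ s * t = V ^ 2 ∧ A = 3 * s ^ 2 ∧ B = t ^ 2 := by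
  obtain ⟨A, rfl⟩ := h3
  obtain ⟨s, t, hs, ht, rfl, rfl⟩ := exists_sq_sq_of_isCoprime_of_mul_eq_sq (by omega) hB
    (hAB.of_mul_left_right) (show A * _ = (V ^ 2) ^ 2 by linarith)
  refine ⟨s, t, hs, ht, (IsCoprime.pow_iff two_pos two_pos).1 hAB.of_mul_left_right, ?_, rfl, rfl⟩
  refine (pow_left_inj₀ (by positivity) (by positivity) two_ne_zero).1 ?_
  linarith

theorem exists_of_four_mul_sq_eq_sq_add_three_mul_pow_four {z W V : ℤ} (hz : 0 < z) (hV : V ≠ 0)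
    (hW : Odd W) (hVW : IsCoprime V W) (h : 4 * z ^ 2 = W ^ 2 + 3 * V ^ 4) :
    ∃ s t : ℤ, 0 < s ∧ 0 < t ∧ IsCoprime s t ∧ s * t = V ^ 2 ∧
      (t ^ 2 - 3 * s ^ 2 = 2 * W ∨ 3 * s ^ 2 - t ^ 2 = 2 * W) := by
  have hAB := isCoprime_two_mul_sub_two_mul_add hW hVW h
  have hprod : (2 * z - W) * (2 * z + W) = 3 * V ^ 4 := by linear_combination h
  obtain ⟨hA, hB⟩ : 0 < 2 * z - W ∧ 0 < 2 * z + W := by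
    have := (pos_and_pos_or_neg_and_neg_of_mul_pos (hprod ▸ by positivity :
      0 < (2 * z - W) * (2 * z + W)))
    omega
  rcases prime_three.dvd_or_dvd ⟨_, hprod⟩ with h3 | h3
  · obtain ⟨s, t, hs, ht, hco, hst, hA', hB'⟩ :=
      exists_of_mul_eq_three_mul_pow_four hA hB hAB h3 hprod
    exact ⟨s, t, hs, ht, hco, hst, .inl (by linear_combination hA' - hB')⟩
  · obtain ⟨s, t, hs, ht, hco, hst, hB', hA'⟩ :=
      exists_of_mul_eq_three_mul_pow_four (V := V) hB hA hAB.symm h3 (by linear_combination hprod)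
    exact ⟨s, t, hs, ht, hco, hst, .inr (by linear_combination hA' - hB')⟩

theorem not_eight_dvd_three_mul_sq_add_two_mul_mul_sub_sq {s t V : ℤ} (hs : Odd s) (ht : Odd t)
    (hst : s * t = V ^ 2) : ¬8 ∣ 3 * s ^ 2 + 2 * s * t - t ^ 2 := by
  have hV : Odd V := (odd_pow' two_ne_zero).1 (hst ▸ hs.mul ht)
  have := sq_emod_eight_eq_one_of_odd hs
  have := sq_emod_eight_eq_one_of_odd ht
  have := sq_emod_eight_eq_one_of_odd hV
  rw [mul_assoc, hst]
  omega

theorem exists_of_three_mul_sq_sub_two_mul_mul_sub_sq {s t x : ℤ} (hs : 0 < s) (hs' : Odd s)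
    (ht' : Odd t) (hco : IsCoprime s t) (hx : Even x)
    (h : 3 * s ^ 2 - 2 * s * t - t ^ 2 = 4 * x ^ 2) :
    ∃ p q : ℤ, IsCoprime p q ∧ x = 2 * p * q ∧ s = p ^ 2 + q ^ 2 ∧ t = p ^ 2 - 3 * q ^ 2 := by
  obtain ⟨r, hr, hrs⟩ := hco.exists_add_eq_two_mul hs' ht'
  have hpy : r ^ 2 + x ^ 2 = s ^ 2 := by
    have : 4 * (r ^ 2 + x ^ 2) = 4 * s ^ 2 := by linear_combination (-(s + t + 2 * r)) * hr - h
    linarith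
  have hrx := hrs.of_sq_add_sq_eq_sq hpy
  obtain ⟨p, q, hpq, hr', hx', hs''⟩ := exists_eq_sq_sub_sq_of_sq_add_sq_eq_sq hpy hrx
    (odd_of_isCoprime_of_even hrx.symm hx) hs
  exact ⟨p, q, hpq, hx', hs'', by linear_combination hr - hs'' + 2 * hr'⟩

theorem exists_of_sq_add_two_mul_mul_sub_three_mul_sq {s t y : ℤ} (hs : 0 < s) (ht : 0 < t)
    (hs' : Odd s) (ht' : Odd t) (hco : IsCoprime s t)
    (h : t ^ 2 + 2 * s * t - 3 * s ^ 2 = 4 * y ^ 2) :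
    ∃ p q : ℤ, IsCoprime p q ∧ y = 2 * p * q ∧ s = p ^ 2 - q ^ 2 ∧ t = p ^ 2 + 3 * q ^ 2 := by
  obtain ⟨r, hr, hrs⟩ := hco.exists_add_eq_two_mul hs' ht'
  have hpy : s ^ 2 + y ^ 2 = r ^ 2 := by
    have : 4 * (s ^ 2 + y ^ 2) = 4 * r ^ 2 := by linear_combination (s + t + 2 * r) * hr - h
    linarith
  obtain ⟨p, q, hpq, hs'', hy', hr'⟩ := exists_eq_sq_sub_sq_of_sq_add_sq_eq_sq hpy
    (hrs.symm.of_sq_add_sq_eq_sq hpy) hs' (by linarith)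
  exact ⟨p, q, hpq, hy', hs'', by linear_combination hr - hs'' + 2 * hr'⟩

theorem exists_quartic_plus_of_three_mul_sq_sub_two_mul_mul_sub_sq {s t x y : ℤ} (hs : 0 < s)
    (ht : 0 < t) (hco : IsCoprime s t) (hst : s * t = y ^ 2) (hy : Odd y) (hx : Even x)
    (hx0 : x ≠ 0) (h : 3 * s ^ 2 - 2 * s * t - t ^ 2 = 4 * x ^ 2) :
    ∃ a b c : ℤ, a ≠ 0 ∧ b ≠ 0 ∧ IsCoprime a b ∧ c ^ 2 ≤ y ^ 2 ∧
      a ^ 4 + a ^ 2 * b ^ 2 + b ^ 4 = c ^ 2 := by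
  obtain ⟨hs', ht'⟩ := odd_mul.1 (hst ▸ hy.pow)
  obtain ⟨p, q, -, rfl, rfl, rfl⟩ :=
    exists_of_three_mul_sq_sub_two_mul_mul_sub_sq hs hs' ht' hco hx h
  obtain ⟨e, f, he, -, hse, htf⟩ := exists_sq_sq_of_isCoprime_of_mul_eq_sq hs ht hco hst
  have hpy : f ^ 2 + (2 * q) ^ 2 = e ^ 2 := by linear_combination hse - htf
  have hfe : IsCoprime f e := (IsCoprime.pow_iff two_pos two_pos).1 (hse ▸ htf ▸ hco.symm)
  obtain ⟨a, b, hab, -, hq, he'⟩ := exists_eq_sq_sub_sq_of_sq_add_sq_eq_sq hpy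
    (hfe.of_sq_add_sq_eq_sq hpy) ((odd_pow' two_ne_zero).1 (htf ▸ ht')) he
  have hq' : q = a * b := by linarith
  have hab0 : a * b ≠ 0 := by rintro h0; simp [hq', h0] at hx0
  refine ⟨a, b, p, left_ne_zero_of_mul hab0, right_ne_zero_of_mul hab0, hab, ?_, ?_⟩
  · nlinarith [sq_nonneg q]
  · linear_combination -(e + a ^ 2 + b ^ 2) * he' - hse + (q + a * b) * hq'

theorem exists_quartic_minus_of_sq_add_two_mul_mul_sub_three_mul_sq {s t x y : ℤ} (hs : 0 < s)
    (ht : 0 < t) (hco : IsCoprime s t) (hst : s * t = x ^ 2) (hx : Odd x) (hy0 : y ≠ 0)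
    (h : t ^ 2 + 2 * s * t - 3 * s ^ 2 = 4 * y ^ 2) :
    ∃ a b c : ℤ, a ≠ 0 ∧ b ≠ 0 ∧ a ^ 2 ≠ b ^ 2 ∧ IsCoprime a b ∧ c ^ 2 ≤ x ^ 2 ∧
      a ^ 4 - a ^ 2 * b ^ 2 + b ^ 4 = c ^ 2 := by
  obtain ⟨hs', ht'⟩ := odd_mul.1 (hst ▸ hx.pow)
  obtain ⟨p, q, hpq, rfl, rfl, rfl⟩ :=
    exists_of_sq_add_two_mul_mul_sub_three_mul_sq hs ht hs' ht' hco h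
  obtain ⟨e, f, he, -, hse, htf⟩ := exists_sq_sq_of_isCoprime_of_mul_eq_sq hs ht hco hst
  have hpq0 : p * q ≠ 0 := by rintro h0; simp [mul_assoc, h0] at hy0
  have hpy : e ^ 2 + q ^ 2 = |p| ^ 2 := by rw [sq_abs]; linear_combination -hse
  have he_odd : Odd e := (odd_pow' two_ne_zero).1 (hse ▸ hs')
  obtain ⟨a, b, hab, he', hq, hp⟩ := exists_eq_sq_sub_sq_of_sq_add_sq_eq_sq hpy
    (hpq.symm.abs_right.of_sq_add_sq_eq_sq (by linear_combination hpy)).symm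
    he_odd (abs_pos.2 (left_ne_zero_of_mul hpq0))
  have he'' : e = (a + b) * (a - b) := by rw [he']; ring
  have hab0 : (a + b) * (a - b) ≠ 0 := he'' ▸ he.ne'
  have hp2 : p ^ 2 = (a ^ 2 + b ^ 2) ^ 2 := by rw [← sq_abs, hp]
  refine ⟨a + b, a - b, f, left_ne_zero_of_mul hab0, right_ne_zero_of_mul hab0, fun h2 => ?_,
    isCoprime_add_sub_of_odd hab (odd_mul.1 (he'' ▸ he_odd)).1, ?_, ?_⟩
  · exact right_ne_zero_of_mul hpq0 (by linarith [show 2 * q = 0 by linear_combination 2 * hq + h2])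
  · nlinarith [sq_nonneg f]
  · linear_combination htf - hp2 - 3 * (q + 2 * a * b) * hq

theorem quartic_plus_ne_sq_of_odd {x y z : ℤ} (hx : Odd x) (hy : Odd y) :
    x ^ 4 + x ^ 2 * y ^ 2 + y ^ 4 ≠ z ^ 2 := by
  intro h
  have := sq_mod_four_eq_one_of_odd (hx.pow (n := 2))
  have := sq_mod_four_eq_one_of_odd (hx.mul hy)
  have := sq_mod_four_eq_one_of_odd (hy.pow (n := 2))
  apply sq_emod_four_ne_three z
  rw [← h, show x ^ 4 + x ^ 2 * y ^ 2 + y ^ 4 = (x ^ 2) ^ 2 + (x * y) ^ 2 + (y ^ 2) ^ 2 by ring]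
  omega

theorem exists_quartic_minus_of_odd_of_odd {x y z : ℤ} (hx : Odd x) (hy : Odd y)
    (hxy : IsCoprime x y) (hne : x ^ 2 ≠ y ^ 2) (h : x ^ 4 - x ^ 2 * y ^ 2 + y ^ 4 = z ^ 2) :
    ∃ a b c : ℤ, a ≠ 0 ∧ b ≠ 0 ∧ a ^ 2 ≠ b ^ 2 ∧ IsCoprime a b ∧ c ^ 2 < z ^ 2 ∧
      a ^ 4 - a ^ 2 * b ^ 2 + b ^ 4 = c ^ 2 := by
  have hxy0 : x * y ≠ 0 := by rintro h0; simpa [h0] using hx.mul hy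
  have hpy : (x * y) ^ 2 + (x ^ 2 - y ^ 2) ^ 2 = |z| ^ 2 := by
    rw [sq_abs]; linear_combination h
  have hco : IsCoprime (x * y) (x ^ 2 - y ^ 2) := by
    refine IsCoprime.mul_left ?_ ?_
    · rw [show x ^ 2 - y ^ 2 = -(y ^ 2 - x * x) by ring, IsCoprime.neg_right_iff,
        IsCoprime.sub_mul_left_right_iff]
      exact hxy.pow_right
    · rw [show x ^ 2 - y ^ 2 = x ^ 2 - y * y by ring, IsCoprime.sub_mul_left_right_iff]
      exact hxy.symm.pow_right
  have hz : 0 < |z| := by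
    have : 0 < |z| ^ 2 := hpy ▸ add_pos_of_pos_of_nonneg (pow_two_pos_of_ne_zero hxy0) (sq_nonneg _)
    exact abs_pos.2 (by rintro rfl; simp at this)
  obtain ⟨p, q, hpq, hxy', hx2, hz'⟩ := exists_eq_sq_sub_sq_of_sq_add_sq_eq_sq hpy hco
    (hx.mul hy) hz
  obtain ⟨w, hw⟩ := (hx.pow (n := 2)).add_odd (hy.pow (n := 2))
  have hpq0 : p * q ≠ 0 := fun h0 => hne (by linear_combination hx2 + 2 * h0)
  have hw2 : p ^ 4 - p ^ 2 * q ^ 2 + q ^ 4 = w ^ 2 := by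
    have : 4 * (p ^ 4 - p ^ 2 * q ^ 2 + q ^ 4) = 4 * w ^ 2 := by
      linear_combination (x ^ 2 + y ^ 2 + 2 * w) * hw - (x ^ 2 - y ^ 2 + 2 * p * q) * hx2
        - 4 * (x * y + p ^ 2 - q ^ 2) * hxy'
    linarith
  have hz2 : z ^ 2 = (p ^ 2 + q ^ 2) ^ 2 := by rw [← sq_abs, hz']
  refine ⟨p, q, w, left_ne_zero_of_mul hpq0, right_ne_zero_of_mul hpq0,
    fun h2 => hxy0 (by linear_combination hxy' + h2), hpq, ?_, hw2⟩
  nlinarith [pow_two_pos_of_ne_zero hpq0]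

theorem exists_quartic_plus_descent {x y z : ℤ} (hx : x ≠ 0) (hy : y ≠ 0) (hxy : IsCoprime x y)
    (h : x ^ 4 + x ^ 2 * y ^ 2 + y ^ 4 = z ^ 2) :
    ∃ a b c : ℤ, a ≠ 0 ∧ b ≠ 0 ∧ IsCoprime a b ∧ c ^ 2 < z ^ 2 ∧
      a ^ 4 + a ^ 2 * b ^ 2 + b ^ 4 = c ^ 2 := by
  wlog hxe : Even x generalizing x y
  · rcases even_or_odd y with hye | hyo
    · exact this hy hx hxy.symm (by linear_combination h) hye
    · exact absurd h (quartic_plus_ne_sq_of_odd (not_even_iff_odd.1 hxe) hyo)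
  have hyo := odd_of_isCoprime_of_even hxy hxe
  have hy2 : y ^ 2 < z ^ 2 := by
    have := pow_two_pos_of_ne_zero hx
    have := pow_two_pos_of_ne_zero hy
    nlinarith
  have hz : 0 < |z| := abs_pos.2 (by rintro rfl; nlinarith)
  have hW : Odd (2 * x ^ 2 + y ^ 2) := (even_two_mul _).add_odd hyo.pow
  have hyW : IsCoprime y (2 * x ^ 2 + y ^ 2) := by
    rw [show 2 * x ^ 2 + y ^ 2 = 2 * x ^ 2 + y * y by ring, IsCoprime.add_mul_left_right_iff]
    exact (isCoprime_two_right.2 hyo).mul_right hxy.symm.pow_right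
  obtain ⟨s, t, hs, ht, hco, hst, hW | hW⟩ := exists_of_four_mul_sq_eq_sq_add_three_mul_pow_four hz
    hy hW hyW (by rw [sq_abs]; linear_combination -4 * h)
  · obtain ⟨hs', ht'⟩ := odd_mul.1 (hst ▸ hyo.pow)
    obtain ⟨x', rfl⟩ := hxe
    exact absurd ⟨-2 * x' ^ 2, by linear_combination -hW + 2 * hst⟩
      (not_eight_dvd_three_mul_sq_add_two_mul_mul_sub_sq hs' ht' hst)
  · obtain ⟨a, b, c, ha, hb, hab, hc, h'⟩ :=
      exists_quartic_plus_of_three_mul_sq_sub_two_mul_mul_sub_sq hs ht hco hst hyo hxe hx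
        (by linear_combination hW - 2 * hst)
    exact ⟨a, b, c, ha, hb, hab, hc.trans_lt hy2, h'⟩

theorem exists_quartic_minus_descent {x y z : ℤ} (hx : x ≠ 0) (hy : y ≠ 0) (hne : x ^ 2 ≠ y ^ 2)
    (hxy : IsCoprime x y) (h : x ^ 4 - x ^ 2 * y ^ 2 + y ^ 4 = z ^ 2) :
    ∃ a b c : ℤ, a ≠ 0 ∧ b ≠ 0 ∧ a ^ 2 ≠ b ^ 2 ∧ IsCoprime a b ∧ c ^ 2 < z ^ 2 ∧
      a ^ 4 - a ^ 2 * b ^ 2 + b ^ 4 = c ^ 2 := by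
  wlog hye : Even y generalizing x y
  · rcases even_or_odd x with hxe | hxo
    · exact this hy hx hne.symm hxy.symm (by linear_combination h) hxe
    · exact exists_quartic_minus_of_odd_of_odd hxo (not_even_iff_odd.1 hye) hxy hne h
  have hxo := odd_of_isCoprime_of_even hxy.symm hye
  obtain ⟨y', rfl⟩ := hye
  have hx2 : x ^ 2 < z ^ 2 := by
    have := pow_two_pos_of_ne_zero hx
    have := pow_two_pos_of_ne_zero (show y' ≠ 0 by rintro rfl; simp at hy)
    nlinarith [sq_nonneg (x ^ 2 - (y' + y') ^ 2)]
  have hz : 0 < |z| := abs_pos.2 (by rintro rfl; nlinarith)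
  have hW : Odd (2 * (y' + y') ^ 2 - x ^ 2) := (even_two_mul _).sub_odd hxo.pow
  have hxW : IsCoprime x (2 * (y' + y') ^ 2 - x ^ 2) := by
    rw [show 2 * (y' + y') ^ 2 - x ^ 2 = 2 * (y' + y') ^ 2 - x * x by ring,
      IsCoprime.sub_mul_left_right_iff]
    exact (isCoprime_two_right.2 hxo).mul_right hxy.pow_right
  obtain ⟨s, t, hs, ht, hco, hst, hW | hW⟩ := exists_of_four_mul_sq_eq_sq_add_three_mul_pow_four hz
    hx hW hxW (by rw [sq_abs]; linear_combination -4 * h)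
  · obtain ⟨a, b, c, ha, hb, hab, hne', hc, h'⟩ :=
      exists_quartic_minus_of_sq_add_two_mul_mul_sub_three_mul_sq hs ht hco hst hxo hy
        (by linear_combination hW + 2 * hst)
    exact ⟨a, b, c, ha, hb, hab, hne', hc.trans_lt hx2, h'⟩
  · obtain ⟨hs', ht'⟩ := odd_mul.1 (hst ▸ hxo.pow)
    exact absurd ⟨2 * y' ^ 2, by linear_combination hW + 2 * hst⟩
      (not_eight_dvd_three_mul_sq_add_two_mul_mul_sub_sq hs' ht' hst)

theorem quartic_plus_ne_sq {x y z : ℤ} (hx : x ≠ 0) (hy : y ≠ 0) (hxy : IsCoprime x y) :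
    x ^ 4 + x ^ 2 * y ^ 2 + y ^ 4 ≠ z ^ 2 := fun h =>
  not_of_sq_descent (P := fun z => ∃ x y : ℤ, x ≠ 0 ∧ y ≠ 0 ∧ IsCoprime x y ∧
      x ^ 4 + x ^ 2 * y ^ 2 + y ^ 4 = z ^ 2)
    (fun _ ⟨_, _, hx, hy, hxy, h⟩ =>
      have ⟨a, b, c, ha, hb, hab, hc, h'⟩ := exists_quartic_plus_descent hx hy hxy h
      ⟨c, hc, a, b, ha, hb, hab, h'⟩)
    z ⟨x, y, hx, hy, hxy, h⟩

theorem quartic_minus_ne_sq {x y z : ℤ} (hx : x ≠ 0) (hy : y ≠ 0) (hne : x ^ 2 ≠ y ^ 2)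
    (hxy : IsCoprime x y) : x ^ 4 - x ^ 2 * y ^ 2 + y ^ 4 ≠ z ^ 2 := fun h =>
  not_of_sq_descent (P := fun z => ∃ x y : ℤ, x ≠ 0 ∧ y ≠ 0 ∧ x ^ 2 ≠ y ^ 2 ∧ IsCoprime x y ∧
      x ^ 4 - x ^ 2 * y ^ 2 + y ^ 4 = z ^ 2)
    (fun _ ⟨_, _, hx, hy, hne, hxy, h⟩ =>
      have ⟨a, b, c, ha, hb, hab, hco, hc, h'⟩ := exists_quartic_minus_descent hx hy hne hxy h
      ⟨c, hc, a, b, ha, hb, hab, hco, h'⟩)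
    z ⟨x, y, hx, hy, hne, hxy, h⟩

theorem not_isSquare_mul_of_sq_eq_sq_add_mul_add_sq {a b c : ℤ} (ha : 0 < a) (hb : 0 < b)
    (hab : IsCoprime a b) (h : c ^ 2 = a ^ 2 + a * b + b ^ 2) : ¬IsSquare (a * b) := by
  rintro ⟨r, hr⟩
  obtain ⟨u, v, hu, hv, rfl, rfl⟩ :=
    exists_sq_sq_of_isCoprime_of_mul_eq_sq ha hb hab (hr.trans (sq r).symm)
  exact quartic_plus_ne_sq (z := c) hu.ne' hv.ne' ((IsCoprime.pow_iff two_pos two_pos).1 hab)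
    (by linear_combination -h)

theorem not_isSquare_mul_of_sq_eq_sq_sub_mul_add_sq {a b c : ℤ} (ha : 0 < a) (hb : 0 < b)
    (hne : a ≠ b) (hab : IsCoprime a b) (h : c ^ 2 = a ^ 2 - a * b + b ^ 2) :
    ¬IsSquare (a * b) := by
  rintro ⟨r, hr⟩
  obtain ⟨u, v, hu, hv, rfl, rfl⟩ :=
    exists_sq_sq_of_isCoprime_of_mul_eq_sq ha hb hab (hr.trans (sq r).symm)
  exact quartic_minus_ne_sq (z := c) hu.ne' hv.ne' hne ((IsCoprime.pow_iff two_pos two_pos).1 hab)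
    (by linear_combination -h)

theorem not_isSquare_mul_of_squarefree {m w : ℤ} (hm : 1 < m) (hsf : Squarefree m)
    (hmw : IsCoprime m w) : ¬IsSquare (m * w) := by
  rintro ⟨r, hr⟩
  obtain ⟨a, ha | ha⟩ := sq_of_isCoprime hmw (hr.trans (sq r).symm)
  · rcases isUnit_iff.1 (hsf a ⟨1, by rw [ha]; ring⟩) with rfl | rfl <;> simp_all
  · nlinarith [sq_nonneg a]

theorem not_isSquare_prod_of_sq_eq_sq_add_mul_add_sq {m n l k : ℤ} (hm : 0 < m) (hn : 0 < n)
    (hl : 0 < l) (hk : k = n + l) (heq : m ^ 2 = n ^ 2 + n * l + l ^ 2) (hmsf : Squarefree m)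
    (hmn : IsCoprime m n) (hml : IsCoprime m l) (hnl : IsCoprime n l) (U : Finset (Fin 4))
    (hU : U.Nonempty) (hev : Even U.card) : ¬IsSquare (∏ i ∈ U, ![k, l, m, n] i) := by
  have hkl : IsCoprime k l := by simpa [hk] using hnl.add_mul_right_left 1
  have hkn : IsCoprime k n := by simpa [hk, add_comm] using hnl.symm.add_mul_right_left 1
  obtain h2 | rfl | rfl | rfl : 2 ∈ U ∨ U = {0, 1} ∨ U = {0, 3} ∨ U = {1, 3} := by
    revert U; decide
  · have hmk : IsCoprime m k := by
      have : IsCoprime m (l ^ 2 + m * -m) := hml.pow_right.add_mul_left_right _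
      rw [show l ^ 2 + m * -m = k * (l - k) by rw [hk]; linear_combination -heq] at this
      exact this.of_mul_right_left
    rw [← Finset.mul_prod_erase U _ h2]
    refine not_isSquare_mul_of_squarefree (show 1 < m by nlinarith [mul_pos hn hl]) hmsf
      (IsCoprime.prod_right fun i hi => ?_)
    fin_cases i <;> simp_all
  all_goals rw [Finset.prod_pair (by decide)]
  · show ¬IsSquare (k * l)
    exact not_isSquare_mul_of_sq_eq_sq_sub_mul_add_sq (c := m) (by omega) hl (by omega) hkl
      (by rw [hk]; linear_combination heq)
  · show ¬IsSquare (k * n)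
    exact not_isSquare_mul_of_sq_eq_sq_sub_mul_add_sq (c := m) (by omega) hn (by omega) hkn
      (by rw [hk]; linear_combination heq)
  · show ¬IsSquare (l * n)
    simpa [mul_comm] using not_isSquare_mul_of_sq_eq_sq_add_mul_add_sq hn hl hnl heq

end Int

open scoped symmDiff

section SquareClasses

variable {ι : Type*} [DecidableEq ι]

theorem Finset.prod_mul_prod_eq_sq_mul_prod_symmDiff {M : Type*} [CommMonoid M] (f : ι → M)
    (s t : Finset ι) :
    (∏ i ∈ s, f i) * ∏ i ∈ t, f i = (∏ i ∈ s ∩ t, f i) ^ 2 * ∏ i ∈ s ∆ t, f i := by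
  rw [← prod_union_inter, symmDiff_eq_sup_sdiff_inf, ← prod_sdiff inter_subset_union]
  simp only [sup_eq_union, inf_eq_inter, sq]
  ac_rfl

theorem Finset.even_card_symmDiff {s t : Finset ι} (hs : Even s.card) (ht : Even t.card) :
    Even (s ∆ t).card := by
  have h₁ := card_union_add_card_inter s t
  have h₂ := card_sdiff_of_subset (inter_subset_union (s := s) (t := t))
  have h₃ := card_le_card (inter_subset_union (s := s) (t := t))
  rw [symmDiff_eq_sup_sdiff_inf, sup_eq_union, inf_eq_inter, h₂]
  rw [Nat.even_iff] at *
  omega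

def signedProd (f : ι → ℤ) (p : Bool × Finset ι) : ℤ :=
  if p.1 then -∏ i ∈ p.2, f i else ∏ i ∈ p.2, f i

theorem eq_of_signedProd_eq_sq_mul {f : ι → ℤ} (hf : ∀ i, 0 < f i)
    (hsq : ∀ U : Finset ι, U.Nonempty → Even U.card → ¬IsSquare (∏ i ∈ U, f i))
    {p p' : Bool × Finset ι} (hp : Even p.2.card) (hp' : Even p'.2.card) {q : ℚ}
    (h : (signedProd f p : ℚ) = q ^ 2 * signedProd f p') : p = p' := by
  obtain ⟨b, S⟩ := p
  obtain ⟨b', T⟩ := p'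
  have hS : 0 < ∏ i ∈ S, (f i : ℚ) := Finset.prod_pos fun i _ => by exact_mod_cast hf i
  have hT : 0 < ∏ i ∈ T, (f i : ℚ) := Finset.prod_pos fun i _ => by exact_mod_cast hf i
  obtain rfl : b = b' := by
    cases b <;> cases b' <;> simp only [signedProd] at h <;> push_cast at h <;> first
      | rfl | nlinarith [sq_nonneg q]
  have h' : ((∏ i ∈ S, f i : ℤ) : ℚ) = q ^ 2 * (∏ i ∈ T, f i : ℤ) := by
    cases b <;> simpa [signedProd] using h
  simp only [Prod.mk.injEq, true_and]
  by_contra hne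
  apply hsq (S ∆ T) (Finset.symmDiff_nonempty.2 hne) (Finset.even_card_symmDiff hp hp')
  have hC : ((∏ i ∈ S ∩ T, f i : ℤ) : ℚ) ≠ 0 := by
    exact_mod_cast (Finset.prod_pos fun i _ => hf i).ne'
  have key := congrArg (fun z : ℤ => (z : ℚ)) (Finset.prod_mul_prod_eq_sq_mul_prod_symmDiff f S T)
  push_cast at key h' hC
  rw [← Rat.isSquare_intCast_iff]
  refine ⟨q * (∏ i ∈ T, (f i : ℚ)) / ∏ i ∈ S ∩ T, (f i : ℚ), ?_⟩
  push_cast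
  field_simp
  linear_combination key.symm + (∏ i ∈ T, (f i : ℚ)) * h'

theorem pairwise_map_signedProd {f : ι → ℤ} (hf : ∀ i, 0 < f i)
    (hsq : ∀ U : Finset ι, U.Nonempty → Even U.card → ¬IsSquare (∏ i ∈ U, f i))
    {L : List (Bool × Finset ι)} (hL : L.Nodup) (heven : ∀ p ∈ L, Even p.2.card) :
    (L.map (signedProd f)).Pairwise fun r s : ℤ => ¬∃ q : ℚ, (r : ℚ) = q ^ 2 * (s : ℚ) :=
  List.pairwise_map.2 <| hL.imp_of_mem fun ha hb hne ⟨_, hq⟩ =>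
    hne (eq_of_signedProd_eq_sq_mul hf hsq (heven _ ha) (heven _ hb) hq)

end SquareClasses

theorem fourteen_classes_general (m n l k : ℤ) (hm : 0 < m) (hn : 0 < n) (hl : 0 < l)
    (hk : k = n + l)
    (heq : m ^ 2 = n ^ 2 + n * l + l ^ 2) (hmsf : Squarefree m)
    (hmn : IsCoprime m n) (hml : IsCoprime m l) (hnl : IsCoprime n l) :
    List.Pairwise (fun r s : ℤ => ¬∃ q : ℚ, (r : ℚ) = q ^ 2 * (s : ℚ))
      [k * l, k * n, n * l, m * n, m * l, m * k,
        -(k * l), -(k * n), -(n * l), -(m * n), -(m * l), -(m * k),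
        k * l * m * n, -(k * l * m * n)] := by
  have hpos : ∀ i, 0 < ![k, l, m, n] i := by intro i; fin_cases i <;> simp <;> omega
  -- each index set lists the factors in the order in which the statement writes them
  convert pairwise_map_signedProd hpos
    (Int.not_isSquare_prod_of_sq_eq_sq_add_mul_add_sq hm hn hl hk heq hmsf hmn hml hnl)
    (L := [(false, {0, 1}), (false, {0, 3}), (false, {3, 1}), (false, {2, 3}), (false, {2, 1}),
      (false, {2, 0}), (true, {0, 1}), (true, {0, 3}), (true, {3, 1}), (true, {2, 3}),
      (true, {2, 1}), (true, {2, 0}), (false, Finset.univ), (true, Finset.univ)])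
    (by decide) (by decide) using 1
  simp [signedProd, Finset.prod_insert, Fin.prod_univ_four]

/-- the 14 integers kl, kn, nl, mn, ml, mk, and their negatives,
together with ±klmn, are pairwise inequivalent modulo squares of rationals. -/
theorem fourteen_classes (m n l k A : ℤ) (hm : 0 < m) (hn : 0 < n) (hl : 0 < l)
    (hnl' : n ≠ l) (hk : k = n + l) (hA : A = k * l * m * n)
    (heq : m ^ 2 = n ^ 2 + n * l + l ^ 2) (hmsf : Squarefree m)
    (hmn : IsCoprime m n) (hml : IsCoprime m l) (hnl : IsCoprime n l) :
    List.Pairwise (fun r s : ℤ => ¬∃ q : ℚ, (r : ℚ) = q ^ 2 * (s : ℚ))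
      [k * l, k * n, n * l, m * n, m * l, m * k,
        -(k * l), -(k * n), -(n * l), -(m * n), -(m * l), -(m * k),
        k * l * m * n, -(k * l * m * n)] :=
  fourteen_classes_general m n l k hm hn hl hk heq hmsf hmn hml hnl
end

section
/- If p is a prime with p ≡ 1 (mod 6), then there exists a pair of positive integers (n, l) with l < n and p² = n² + nl + l², and gcd(n, l) = 1, and this pair is unique. -/
/-- p is not a perfect square (p prime). -/
private lemma aux_p_ne_sq (p : ℕ) (hp : p.Prime) (x : ℤ) : (p : ℤ) ≠ x ^ 2 := by
  intro h
  have hx : p = x.natAbs ^ 2 := by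
    have := congrArg Int.natAbs h
    simpa [Int.natAbs_pow] using this
  have hdvd : x.natAbs ∣ p := ⟨x.natAbs, by rw [hx]; ring⟩
  rcases (hp.eq_one_or_self_of_dvd _ hdvd) with h1 | h1
  · rw [h1] at hx; simp at hx; have := hp.two_le; omega
  · rw [h1] at hx; nlinarith [hp.two_le]

private lemma aux_p_ne_three_sq (p : ℕ) (hp : p.Prime) (hmod : p % 6 = 1) (x : ℤ) :
    (p : ℤ) ≠ 3 * x ^ 2 := by
  intro h
  have h3 : (3 : ℤ) ∣ (p : ℤ) := ⟨x ^ 2, h⟩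
  have h3' : (3 : ℕ) ∣ p := by exact_mod_cast h3
  have := (Nat.prime_dvd_prime_iff_eq (by norm_num) hp).mp h3'
  omega

private lemma aux_psq_ne_three_sq (p : ℕ) (hp : p.Prime) (hmod : p % 6 = 1) (x : ℤ) :
    3 * x ^ 2 ≠ (p : ℤ) ^ 2 := by
  intro h
  have h3 : Prime (3 : ℤ) := Int.prime_three
  have hdvd : (3 : ℤ) ∣ ((p : ℤ)) ^ 2 := ⟨x ^ 2, h.symm⟩
  have h3p : (3 : ℤ) ∣ (p : ℤ) := h3.dvd_of_dvd_pow hdvd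
  have h3' : (3 : ℕ) ∣ p := by exact_mod_cast h3p
  have := (Nat.prime_dvd_prime_iff_eq (by norm_num) hp).mp h3'
  omega

/-- Thue's lemma. -/
private lemma aux_thue (p : ℕ) (hp : p.Prime) (r : ℤ) :
    ∃ a b : ℤ, ¬(a = 0 ∧ b = 0) ∧ a ^ 2 < p ∧ b ^ 2 < p ∧ (p : ℤ) ∣ a - r * b := by
  haveI := Fact.mk hp
  set s := Nat.sqrt p with hs
  have hss : s * s < p := by
    rcases lt_or_eq_of_le (Nat.sqrt_le p) with h | h
    · exact h
    · exfalso
      exact aux_p_ne_sq p hp (s : ℤ) (by exact_mod_cast h.symm ▸ (by push_cast; ring : ((s*s : ℕ) : ℤ) = (s:ℤ)^2))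
  have hcard : (Finset.univ : Finset (ZMod p)).card <
      ((Finset.range (s+1)) ×ˢ (Finset.range (s+1))).card := by
    rw [Finset.card_product, Finset.card_range, Finset.card_univ, ZMod.card]
    simpa [hs, Nat.succ_eq_add_one] using Nat.lt_succ_sqrt p
  obtain ⟨⟨i, j⟩, hij, ⟨i', j'⟩, hij', hne, heq⟩ :=
    Finset.exists_ne_map_eq_of_card_lt_of_maps_to hcard
      (f := fun x => ((x.1 : ZMod p) - r * (x.2 : ZMod p)))
      (fun x _ => Finset.mem_univ _)
  simp only [Finset.mem_product, Finset.mem_range] at hij hij'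
  refine ⟨(i : ℤ) - i', (j : ℤ) - j', ?_, ?_, ?_, ?_⟩
  · rintro ⟨h1, h2⟩
    apply hne
    have : i = i' := by omega
    have : j = j' := by omega
    simp_all
  · have h1 : ((i : ℤ) - i') ^ 2 ≤ (s : ℤ) ^ 2 := by
      apply sq_le_sq'
      · push_cast; omega
      · push_cast; omega
    have h2 : ((s : ℤ)) ^ 2 < (p : ℤ) := by push_cast; nlinarith
    linarith
  · have h1 : ((j : ℤ) - j') ^ 2 ≤ (s : ℤ) ^ 2 := by
      apply sq_le_sq'
      · push_cast; omega
      · push_cast; omega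
    have h2 : ((s : ℤ)) ^ 2 < (p : ℤ) := by push_cast; nlinarith
    linarith
  · rw [← ZMod.intCast_zmod_eq_zero_iff_dvd]
    push_cast
    linear_combination heq

/-- there is a root of x²+x+1 mod p -/
private lemma aux_root (p : ℕ) (hp : p.Prime) (hmod : p % 6 = 1) :
    ∃ r : ℤ, (p : ℤ) ∣ r ^ 2 + r + 1 := by
  haveI := Fact.mk hp
  haveI : Fact (Nat.Prime 3) := ⟨by norm_num⟩
  have hdvd : 3 ∣ Fintype.card (ZMod p)ˣ := by
    rw [ZMod.card_units_eq_totient, Nat.totient_prime hp]; omega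
  obtain ⟨u, hu⟩ := exists_prime_orderOf_dvd_card 3 hdvd
  have hu3 : u ^ 3 = 1 := by rw [← hu]; exact pow_orderOf_eq_one u
  set g : ZMod p := (u : ZMod p) with hg
  have hg3 : g ^ 3 = 1 := by
    rw [hg, ← Units.val_pow_eq_pow_val, hu3, Units.val_one]
  have hgne : g ≠ 1 := by
    intro h
    have : u = 1 := Units.ext (by simpa [hg] using h)
    rw [this, orderOf_one] at hu
    norm_num at hu
  have key : g ^ 2 + g + 1 = 0 := by
    have hfac : (g - 1) * (g ^ 2 + g + 1) = 0 := by linear_combination hg3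
    rcases mul_eq_zero.mp hfac with h | h
    · exact absurd (sub_eq_zero.mp h) hgne
    · exact h
  refine ⟨(g.val : ℤ), ?_⟩
  rw [← ZMod.intCast_zmod_eq_zero_iff_dvd]
  push_cast
  rw [ZMod.natCast_val, ZMod.cast_id]
  exact key

/-- p itself is represented over ℤ. -/
private lemma aux_rep_p (p : ℕ) (hp : p.Prime) (hmod : p % 6 = 1) :
    ∃ a b : ℤ, (p : ℤ) = a ^ 2 + a * b + b ^ 2 := by
  obtain ⟨r, hr⟩ := aux_root p hp hmod
  obtain ⟨a, b, hab, ha, hb, hd⟩ := aux_thue p hp r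
  have hpos : 0 < a ^ 2 + a * b + b ^ 2 := by
    rcases eq_or_ne b 0 with hb0 | hb0
    · subst hb0
      have ha0 : a ≠ 0 := by tauto
      have := lt_of_le_of_ne (sq_nonneg a) (Ne.symm (pow_ne_zero 2 ha0))
      nlinarith
    · have := lt_of_le_of_ne (sq_nonneg b) (Ne.symm (pow_ne_zero 2 hb0))
      nlinarith [sq_nonneg (2 * a + b)]
  have hdvd : (p : ℤ) ∣ a ^ 2 + a * b + b ^ 2 := by
    have hid : a ^ 2 + a * b + b ^ 2
        = (a - r * b) * (a + r * b + b) + b ^ 2 * (r ^ 2 + r + 1) := by ring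
    rw [hid]
    exact dvd_add (hd.mul_right _) (hr.mul_left _)
  have hlt : a ^ 2 + a * b + b ^ 2 < 3 * p := by nlinarith [sq_nonneg (a - b)]
  obtain ⟨k, hk⟩ := hdvd
  have hp0 : (0 : ℤ) < p := by exact_mod_cast hp.pos
  have hk0 : 0 < k := by nlinarith
  have hk3 : k < 3 := by nlinarith
  interval_cases k
  · exact ⟨a, b, by linarith⟩
  · exfalso
    have h2 : ((a : ZMod 3)) ^ 2 + a * b + b ^ 2 = 2 := by
      have := congrArg (fun z : ℤ => (z : ZMod 3)) hk
      push_cast at this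
      rw [this]
      have hp3 : ((p : ℕ) : ZMod 3) = 1 := by
        rw [← ZMod.natCast_mod]
        have : p % 3 = 1 := by omega
        rw [this, Nat.cast_one]
      rw [hp3]
      ring
    have : ∀ x y : ZMod 3, x ^ 2 + x * y + y ^ 2 ≠ 2 := by decide
    exact this _ _ h2

/-- normalization into the sector 0 < l < n, positive case. -/
private lemma aux_sector_pos (p : ℕ) (hp : p.Prime) (hmod : p % 6 = 1) (x y : ℤ)
    (hx : 0 < x) (hy : 0 < y) (h : x ^ 2 + x * y + y ^ 2 = (p : ℤ) ^ 2) :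
    ∃ n l : ℕ, 0 < l ∧ l < n ∧ (p : ℤ) ^ 2 = (n : ℤ) ^ 2 + n * l + l ^ 2 := by
  have hne : x ≠ y := by
    intro he
    subst he
    exact aux_psq_ne_three_sq p hp hmod x (by linarith)
  rcases hne.lt_or_gt with hlt | hlt
  · lift x to ℕ using hx.le
    lift y to ℕ using hy.le
    exact ⟨y, x, by exact_mod_cast hx, by exact_mod_cast hlt, by linarith⟩
  · lift x to ℕ using hx.le
    lift y to ℕ using hy.le
    exact ⟨x, y, by exact_mod_cast hy, by exact_mod_cast hlt, by linarith⟩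

/-- normalization into the sector. -/
private lemma aux_sector (p : ℕ) (hp : p.Prime) (hmod : p % 6 = 1) (x y : ℤ)
    (h : x ^ 2 + x * y + y ^ 2 = (p : ℤ) ^ 2) (hx0 : x ≠ 0) (hy0 : y ≠ 0)
    (hxy0 : x + y ≠ 0) :
    ∃ n l : ℕ, 0 < l ∧ l < n ∧ (p : ℤ) ^ 2 = (n : ℤ) ^ 2 + n * l + l ^ 2 := by
  rcases hx0.lt_or_gt with hx | hx <;> rcases hy0.lt_or_gt with hy | hy
  · -- both negative
    exact aux_sector_pos p hp hmod (-x) (-y) (by linarith) (by linarith) (by linarith)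
  · -- x < 0 < y
    rcases hxy0.lt_or_gt with hs | hs
    · exact aux_sector_pos p hp hmod (-(x + y)) y (by linarith) hy (by linarith)
    · exact aux_sector_pos p hp hmod (x + y) (-x) hs (by linarith) (by linarith)
  · -- y < 0 < x
    rcases hxy0.lt_or_gt with hs | hs
    · exact aux_sector_pos p hp hmod (-(x + y)) x (by linarith) hx (by linarith)
    · exact aux_sector_pos p hp hmod (x + y) (-y) hs (by linarith) (by linarith)
  · exact aux_sector_pos p hp hmod x y hx hy h

/-- n < p for any representation. -/
private lemma aux_lt_p (p n l : ℕ) (hl : 0 < l) (hln : l < n)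
    (h : p ^ 2 = n ^ 2 + n * l + l ^ 2) : n < p := by
  nlinarith

/-- coprimality. -/
private lemma aux_coprime (p : ℕ) (hp : p.Prime) (n l : ℕ) (hl : 0 < l) (hln : l < n)
    (h : p ^ 2 = n ^ 2 + n * l + l ^ 2) : Nat.Coprime n l := by
  have hnp : n < p := aux_lt_p p n l hl hln h
  have hd : Nat.gcd n l ∣ p ^ 2 := by
    have h1 : Nat.gcd n l ∣ n := Nat.gcd_dvd_left _ _
    have h2 : Nat.gcd n l ∣ l := Nat.gcd_dvd_right _ _
    rw [h]
    exact dvd_add (dvd_add (dvd_pow h1 two_ne_zero) (h1.mul_right l)) (dvd_pow h2 two_ne_zero)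
  obtain ⟨i, hi2, he⟩ := (Nat.dvd_prime_pow hp).mp hd
  have hgl : Nat.gcd n l ≤ l := Nat.le_of_dvd hl (Nat.gcd_dvd_right _ _)
  interval_cases i
  · simpa [Nat.Coprime] using he
  · exfalso; rw [pow_one] at he; omega
  · exfalso
    have : p ≤ p ^ 2 := Nat.le_self_pow two_ne_zero p
    omega

private lemma aux_unique (p : ℕ) (hp : p.Prime) (hmod : p % 6 = 1)
    (n l m k : ℕ) (hl : 0 < l) (hln : l < n) (hn : p ^ 2 = n ^ 2 + n * l + l ^ 2)
    (hk : 0 < k) (hkm : k < m) (hm : p ^ 2 = m ^ 2 + m * k + k ^ 2) :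
    n = m ∧ l = k := by
  haveI := Fact.mk hp
  have hp3 : p ≠ 3 := by omega
  have hnp : n < p := aux_lt_p p n l hl hln hn
  have hmp : m < p := aux_lt_p p m k hk hkm hm
  have hcop1 := aux_coprime p hp n l hl hln hn
  have hcop2 := aux_coprime p hp m k hk hkm hm
  have hl0 : (l : ZMod p) ≠ 0 := by
    rw [Ne, ZMod.natCast_eq_zero_iff]
    intro hd
    have := Nat.le_of_dvd hl hd
    omega
  have hk0 : (k : ZMod p) ≠ 0 := by
    rw [Ne, ZMod.natCast_eq_zero_iff]
    intro hd
    have := Nat.le_of_dvd hk hd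
    omega
  have h30 : (3 : ZMod p) ≠ 0 := by
    intro h0
    have : ((3 : ℕ) : ZMod p) = 0 := by exact_mod_cast h0
    rw [ZMod.natCast_eq_zero_iff] at this
    have := (Nat.prime_dvd_prime_iff_eq hp (by norm_num)).mp this
    omega
  set r : ZMod p := n * (l : ZMod p)⁻¹ with hrdef
  set s : ZMod p := m * (k : ZMod p)⁻¹ with hsdef
  have hzn : (n : ZMod p) ^ 2 + n * l + l ^ 2 = 0 := by
    have := congrArg (fun t : ℕ => (t : ZMod p)) hn
    push_cast at this
    rw [ZMod.natCast_self] at this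
    simpa using this.symm
  have hzm : (m : ZMod p) ^ 2 + m * k + k ^ 2 = 0 := by
    have := congrArg (fun t : ℕ => (t : ZMod p)) hm
    push_cast at this
    rw [ZMod.natCast_self] at this
    simpa using this.symm
  have hnr : (n : ZMod p) = r * l := by
    rw [hrdef]; field_simp
  have hms : (m : ZMod p) = s * k := by
    rw [hsdef]; field_simp
  have h1 : r ^ 2 + r + 1 = 0 := by
    have hmul : (r ^ 2 + r + 1) * (l : ZMod p) ^ 2 = 0 := by
      rw [← hzn, hnr]; ring
    rcases mul_eq_zero.mp hmul with h | h
    · exact h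
    · exact absurd h (pow_ne_zero 2 hl0)
  have h2 : s ^ 2 + s + 1 = 0 := by
    have hmul : (s ^ 2 + s + 1) * (k : ZMod p) ^ 2 = 0 := by
      rw [← hzm, hms]; ring
    rcases mul_eq_zero.mp hmul with h | h
    · exact h
    · exact absurd h (pow_ne_zero 2 hk0)
  have hnZ : ((n : ℤ)) ^ 2 + n * l + l ^ 2 = (p : ℤ) ^ 2 := by exact_mod_cast hn.symm
  have hmZ : ((m : ℤ)) ^ 2 + m * k + k ^ 2 = (p : ℤ) ^ 2 := by exact_mod_cast hm.symm
  have hp0 : (0 : ℤ) < (p : ℤ) ^ 2 := by exact_mod_cast pow_pos hp.pos 2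
  have hpne : (p : ℤ) ≠ 0 := by exact_mod_cast hp.ne_zero
  have hcase : r = s ∨ r + s + 1 = 0 := by
    have hfac : (r - s) * (r + s + 1) = 0 := by linear_combination h1 - h2
    rcases mul_eq_zero.mp hfac with h | h
    · exact Or.inl (sub_eq_zero.mp h)
    · exact Or.inr h
  rcases hcase with hrs | hrs
  · -- r = s : conclude equality
    have hBdvd : (p : ℤ) ∣ ((l : ℤ) * m - n * k) := by
      rw [← ZMod.intCast_zmod_eq_zero_iff_dvd]
      push_cast
      rw [hnr, hms, hrs]
      ring
    have hCnd : ¬ (p : ℤ) ∣ ((n : ℤ) * k + l * m + l * k) := by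
      intro hd
      rw [← ZMod.intCast_zmod_eq_zero_iff_dvd] at hd
      push_cast at hd
      rw [hnr, hms, ← hrs] at hd
      have hd' : (l : ZMod p) * k * (2 * r + 1) = 0 := by linear_combination hd
      have h2r : (2 * r + 1) ≠ 0 := by
        intro h0
        apply h30
        linear_combination (4 : ZMod p) * h1 - (2 * r + 1) * h0
      rcases mul_eq_zero.mp hd' with h | h
      · rcases mul_eq_zero.mp h with h' | h'
        · exact hl0 h'
        · exact hk0 h'
      · exact h2r h
    have hid : ((l : ℤ) * m - n * k) * ((n : ℤ) * k + l * m + l * k)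
        = (p : ℤ) ^ 2 * ((l : ℤ) ^ 2 - (k : ℤ) ^ 2) := by
      linear_combination (l : ℤ) ^ 2 * hmZ - (k : ℤ) ^ 2 * hnZ
    obtain ⟨b, hb⟩ := hBdvd
    have hb2 : (p : ℤ) * (b * ((n : ℤ) * k + l * m + l * k))
        = (p : ℤ) * ((p : ℤ) * ((l : ℤ) ^ 2 - (k : ℤ) ^ 2)) := by
      rw [← mul_assoc, ← hb]; linear_combination hid
    have hbC : (p : ℤ) ∣ b * ((n : ℤ) * k + l * m + l * k) :=
      ⟨_, mul_left_cancel₀ hpne hb2⟩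
    have hpb : (p : ℤ) ∣ b := by
      rcases (Int.Prime.dvd_mul' hp hbC) with h | h
      · exact h
      · exact absurd h hCnd
    obtain ⟨c, hc⟩ := hpb
    have hBval : (l : ℤ) * m - n * k = (p : ℤ) ^ 2 * c := by rw [hb, hc]; ring
    have hnkN : n * k < p ^ 2 := by
      rw [pow_two]
      exact Nat.mul_lt_mul_of_lt_of_lt hnp (by omega)
    have hlmN : l * m < p ^ 2 := by
      rw [pow_two]
      exact Nat.mul_lt_mul_of_lt_of_lt (by omega) hmp
    have hb1 : -((p : ℤ) ^ 2) < (l : ℤ) * m - n * k := by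
      have h1 : (n : ℤ) * k < (p : ℤ) ^ 2 := by exact_mod_cast hnkN
      have h2 : (0 : ℤ) ≤ (l : ℤ) * m := mul_nonneg (Int.ofNat_nonneg l) (Int.ofNat_nonneg m)
      linarith
    have hb2' : (l : ℤ) * m - n * k < (p : ℤ) ^ 2 := by
      have h1 : (l : ℤ) * m < (p : ℤ) ^ 2 := by exact_mod_cast hlmN
      have h2 : (0 : ℤ) ≤ (n : ℤ) * k := mul_nonneg (Int.ofNat_nonneg n) (Int.ofNat_nonneg k)
      linarith
    have hBzero : (l : ℤ) * m - n * k = 0 := by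
      rcases lt_trichotomy c 0 with h | h | h
      · exfalso
        have : (p : ℤ) ^ 2 * c ≤ (p : ℤ) ^ 2 * (-1) :=
          mul_le_mul_of_nonneg_left (by omega) (le_of_lt hp0)
        linarith
      · rw [hBval, h, mul_zero]
      · exfalso
        have : (p : ℤ) ^ 2 * 1 ≤ (p : ℤ) ^ 2 * c :=
          mul_le_mul_of_nonneg_left (by omega) (le_of_lt hp0)
        linarith
    have hlmnk : l * m = n * k := by
      have : (l : ℤ) * m = (n : ℤ) * k := by linarith
      exact_mod_cast this
    have hlk : l ∣ k := by
      have hdvd : l ∣ k * n := ⟨m, by rw [mul_comm k n, ← hlmnk]⟩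
      exact Nat.Coprime.dvd_of_dvd_mul_right hcop1.symm hdvd
    have hkl : k ∣ l := by
      have hdvd : k ∣ l * m := ⟨n, by rw [hlmnk, mul_comm]⟩
      exact Nat.Coprime.dvd_of_dvd_mul_right hcop2.symm hdvd
    have hlkeq : l = k := Nat.dvd_antisymm hlk hkl
    subst hlkeq
    have hml : l * m = l * n := by rw [hlmnk, mul_comm]
    exact ⟨(Nat.eq_of_mul_eq_mul_left hl hml).symm, rfl⟩
  · -- r + s + 1 = 0 : contradiction
    exfalso
    have hrs1 : r * s = 1 := by linear_combination r * hrs - h1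
    have hBdvd : (p : ℤ) ∣ ((l : ℤ) * k - n * m) := by
      rw [← ZMod.intCast_zmod_eq_zero_iff_dvd]
      push_cast
      rw [hnr, hms]
      linear_combination -(l : ZMod p) * (k : ZMod p) * hrs1
    have hCnd : ¬ (p : ℤ) ∣ ((n : ℤ) * m + l * k + l * m) := by
      intro hd
      rw [← ZMod.intCast_zmod_eq_zero_iff_dvd] at hd
      push_cast at hd
      rw [hnr, hms] at hd
      have hd' : (l : ZMod p) * k * (s + 2) = 0 := by
        linear_combination hd - (l : ZMod p) * (k : ZMod p) * hrs1
      have h2s : (s + 2) ≠ 0 := by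
        intro h0
        apply h30
        linear_combination h2 + (1 - s) * h0
      rcases mul_eq_zero.mp hd' with h | h
      · rcases mul_eq_zero.mp h with h' | h'
        · exact hl0 h'
        · exact hk0 h'
      · exact h2s h
    have hid : ((l : ℤ) * k - n * m) * ((n : ℤ) * m + l * k + l * m)
        = (p : ℤ) ^ 2 * ((l : ℤ) ^ 2 - (m : ℤ) ^ 2) := by
      linear_combination (l : ℤ) ^ 2 * hmZ - (m : ℤ) ^ 2 * hnZ
    obtain ⟨b, hb⟩ := hBdvd
    have heq2 : (p : ℤ) * (b * ((n : ℤ) * m + l * k + l * m))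
        = (p : ℤ) * ((p : ℤ) * ((l : ℤ) ^ 2 - (m : ℤ) ^ 2)) := by
      rw [← mul_assoc, ← hb]; linear_combination hid
    have hbC : (p : ℤ) ∣ b * ((n : ℤ) * m + l * k + l * m) :=
      ⟨_, mul_left_cancel₀ hpne heq2⟩
    have hpb : (p : ℤ) ∣ b := by
      rcases (Int.Prime.dvd_mul' hp hbC) with h | h
      · exact h
      · exact absurd h hCnd
    obtain ⟨c, hc⟩ := hpb
    have hBval : (l : ℤ) * k - n * m = (p : ℤ) ^ 2 * c := by rw [hb, hc]; ring
    have hlkN : l * k < n * m := Nat.mul_lt_mul_of_lt_of_lt hln hkm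
    have hnmN : n * m < p ^ 2 := by
      rw [pow_two]
      exact Nat.mul_lt_mul_of_lt_of_lt hnp hmp
    have hBneg : (l : ℤ) * k - n * m < 0 := by
      have h1 : (l : ℤ) * k < (n : ℤ) * m := by exact_mod_cast hlkN
      linarith
    have hBgt : -((p : ℤ) ^ 2) < (l : ℤ) * k - n * m := by
      have h1 : (n : ℤ) * m < (p : ℤ) ^ 2 := by exact_mod_cast hnmN
      have h2' : (0 : ℤ) ≤ (l : ℤ) * k := mul_nonneg (Int.ofNat_nonneg l) (Int.ofNat_nonneg k)
      linarith
    rcases lt_trichotomy c 0 with h | h | h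
    · have : (p : ℤ) ^ 2 * c ≤ (p : ℤ) ^ 2 * (-1) :=
        mul_le_mul_of_nonneg_left (by omega) (le_of_lt hp0)
      linarith
    · rw [h, mul_zero] at hBval; linarith
    · have : (p : ℤ) ^ 2 * 1 ≤ (p : ℤ) ^ 2 * c :=
        mul_le_mul_of_nonneg_left (by omega) (le_of_lt hp0)
      linarith

/-- for a prime p ≡ 1 (mod 6), the representation p² = n² + nl + l²
in positive integers l < n exists and is unique, and it satisfies gcd(n, l) = 1. -/
theorem unique_rep_of_prime_sq (p : ℕ) (hp : p.Prime) (hmod : p % 6 = 1) :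
    (∃! q : ℕ × ℕ, 0 < q.2 ∧ q.2 < q.1 ∧ p ^ 2 = q.1 ^ 2 + q.1 * q.2 + q.2 ^ 2) ∧
      ∀ n l : ℕ, 0 < l → l < n → p ^ 2 = n ^ 2 + n * l + l ^ 2 → Nat.Coprime n l := by
  obtain ⟨a, b, hab⟩ := aux_rep_p p hp hmod
  set x : ℤ := a ^ 2 - b ^ 2 with hxdef
  set y : ℤ := 2 * a * b + b ^ 2 with hydef
  have heq : x ^ 2 + x * y + y ^ 2 = (p : ℤ) ^ 2 := by
    rw [hxdef, hydef, hab]; ring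
  have hx0 : x ≠ 0 := by
    intro h0
    have hfac : (a - b) * (a + b) = 0 := by linear_combination h0
    rcases mul_eq_zero.mp hfac with h | h
    · have : a = b := by linarith
      exact aux_p_ne_three_sq p hp hmod b (by rw [hab, this]; ring)
    · have : a = -b := by linarith
      exact aux_p_ne_sq p hp b (by rw [hab, this]; ring)
  have hy0 : y ≠ 0 := by
    intro h0
    have hfac : b * (2 * a + b) = 0 := by linear_combination h0
    rcases mul_eq_zero.mp hfac with h | h
    · exact aux_p_ne_sq p hp a (by rw [hab, h]; ring)
    · have : b = -2 * a := by linarith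
      exact aux_p_ne_three_sq p hp hmod a (by rw [hab, this]; ring)
  have hxy0 : x + y ≠ 0 := by
    intro h0
    have hfac : a * (a + 2 * b) = 0 := by linear_combination h0
    rcases mul_eq_zero.mp hfac with h | h
    · exact aux_p_ne_sq p hp b (by rw [hab, h]; ring)
    · have : a = -2 * b := by linarith
      exact aux_p_ne_three_sq p hp hmod b (by rw [hab, this]; ring)
  obtain ⟨n, l, hl, hln, hrep⟩ := aux_sector p hp hmod x y heq hx0 hy0 hxy0
  have hrepN : p ^ 2 = n ^ 2 + n * l + l ^ 2 := by exact_mod_cast hrep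
  constructor
  · refine ⟨(n, l), ⟨hl, hln, hrepN⟩, ?_⟩
    rintro ⟨m, k⟩ ⟨h1, h2, h3⟩
    obtain ⟨e1, e2⟩ := aux_unique p hp hmod m k n l h1 h2 h3 hl hln hrepN
    simp [e1, e2]
  · intro n' l' h1 h2 h3
    exact aux_coprime p hp n' l' h1 h2 h3
end
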